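/- arXiv:1312.4635 — 17 statements merged into one kernel-verified Lean document; each statement's English description precedes it below -/
import Mathlib

section
/- Let T = Trian(A, M, B) be a triangular algebra over R in which A and B have only trivial idempotents, and let σ be an automorphism of T given in standard form with data (f, g, m₀, ν). Then every σ-centralizing R-linear map Θ of T can be written as Θ(a, m, b) = (δ₁(a) + δ₂(m) + δ₃(b), −m₀·(μ₁(a) + μ₂(m) + μ₃(b)) + δ₁(1_A)·m − ν(m)·μ₁(1_A), μ₁(a) + μ₂(m) + μ₃(b)), where δ₁ : A → A, δ₂ : M → Z_f(A), δ₃ : B → A, μ₁ : A → B, μ₂ : M → Z_g(B), μ₃ : B → B are R-linear maps satisfying, for all a ∈ A, m ∈ M, b ∈ B: (i) f(a)δ₁(a) = δ₁(a)a; (ii) g(b)μ₃(b) = μ₃(b)b; (iii) δ₁(a)·m − ν(m)·μ₁(a) = f(a)·(δ₁(1_A)·m − ν(m)·μ₁(1_A)); (iv) ν(m)·μ₃(b) − δ₃(b)·m = (ν(m)·μ₃(1_B) − δ₃(1_B)·m)·b; (v) δ₂(m)·m = ν(m)·μ₂(m); (vi) δ₁(1_A)·m − ν(m)·μ₁(1_A)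 = ν(m)·μ₃(1_B) − δ₃(1_B)·m; (vii) f(a)δ₃(b) − δ₃(b)a ∈ Z(A); (viii) g(b)μ₁(a) − μ₁(a)b ∈ Z(B). -/
/-!
Triangular algebras `Trian(A, M, B)` realized on the type `A × M × B`, where `A`, `B` are
unital associative `R`-algebras and `M` is an `(A, B)`-bimodule (a left `A`-module and a
right `B`-module, the right action being encoded as a left `Bᵐᵒᵖ`-action, written
`op b • m`, with the two actions commuting), compatible with the `R`-module structure.
-/

set_option linter.unusedSectionVars false

open MulOpposite

variable {R A B M : Type*} [CommRing R] [Ring A] [Ring B]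
  [Algebra R A] [Algebra R B]
  [AddCommGroup M] [Module R M]
  [Module A M] [Module Bᵐᵒᵖ M]
  [SMulCommClass A Bᵐᵒᵖ M]
  [IsScalarTower R A M] [SMulCommClass R A M]
  [IsScalarTower R Bᵐᵒᵖ M] [SMulCommClass R Bᵐᵒᵖ M]

/-- Multiplication of the triangular algebra `Trian(A, M, B)`:
`(a, m, b) * (a', m', b') = (a * a', a • m' + m • b', b * b')`, where the right action of
`B` on `M` is written `op b • m`. -/
instance triMul : Mul (A × M × B) :=
  ⟨fun x y => (x.1 * y.1, x.1 • y.2.1 + op y.2.2 • x.2.1, x.2.2 * y.2.2)⟩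

theorem tri_mul_def (x y : A × M × B) :
    x * y = (x.1 * y.1, x.1 • y.2.1 + op y.2.2 • x.2.1, x.2.2 * y.2.2) := rfl

instance triOne : One (A × M × B) := ⟨(1, 0, 1)⟩

theorem tri_one_def : (1 : A × M × B) = (1, 0, 1) := rfl

/-- The triangular algebra `Trian(A, M, B)` as a ring structure on `A × M × B`. -/
instance triRing : Ring (A × M × B) where
  __ := (inferInstance : AddCommGroup (A × M × B))
  __ := triMul
  __ := triOne
  left_distrib x y z := by
    refine Prod.ext ?_ (Prod.ext ?_ ?_) <;>
      simp [tri_mul_def, mul_add, smul_add, add_smul, Prod.fst_add, Prod.snd_add] <;> abel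
  right_distrib x y z := by
    refine Prod.ext ?_ (Prod.ext ?_ ?_) <;>
      simp [tri_mul_def, add_mul, smul_add, add_smul, Prod.fst_add, Prod.snd_add] <;> abel
  zero_mul x := by
    refine Prod.ext ?_ (Prod.ext ?_ ?_) <;> simp [tri_mul_def]
  mul_zero x := by
    refine Prod.ext ?_ (Prod.ext ?_ ?_) <;> simp [tri_mul_def]
  mul_assoc x y z := by
    refine Prod.ext (mul_assoc _ _ _) (Prod.ext ?_ (mul_assoc _ _ _))
    show (x.1 * y.1) • z.2.1 + op z.2.2 • (x.1 • y.2.1 + op y.2.2 • x.2.1)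
        = x.1 • (y.1 • z.2.1 + op z.2.2 • y.2.1) + op (y.2.2 * z.2.2) • x.2.1
    rw [mul_smul, smul_add, smul_add, op_mul, mul_smul, smul_comm x.1 (op z.2.2)]
    abel
  one_mul x := by
    refine Prod.ext (one_mul _) (Prod.ext ?_ (one_mul _))
    show (1 : A) • x.2.1 + op x.2.2 • (0 : M) = x.2.1
    simp
  mul_one x := by
    refine Prod.ext (mul_one _) (Prod.ext ?_ (mul_one _))
    show x.1 • (0 : M) + op (1 : B) • x.2.1 = x.2.1
    simp

/-- The triangular algebra `Trian(A, M, B)` as an `R`-algebra. -/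
instance triAlgebra : Algebra R (A × M × B) :=
  Algebra.ofModule
    (fun r x y => by
      refine Prod.ext ?_ (Prod.ext ?_ ?_)
      · exact smul_mul_assoc r x.1 y.1
      · show (r • x.1) • y.2.1 + op y.2.2 • (r • x.2.1) = r • (x.1 • y.2.1 + op y.2.2 • x.2.1)
        rw [smul_assoc, smul_add, smul_comm (op y.2.2) r]
      · exact smul_mul_assoc r x.2.2 y.2.2)
    (fun r x y => by
      refine Prod.ext ?_ (Prod.ext ?_ ?_)
      · exact mul_smul_comm r x.1 y.1
      · show x.1 • (r • y.2.1) + op (r • y.2.2) • x.2.1 = r • (x.1 • y.2.1 + op y.2.2 • x.2.1)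
        rw [op_smul, smul_assoc, smul_add, smul_comm x.1 r]
      · exact mul_smul_comm r x.2.2 y.2.2)

/-!
Decoding `[x, Θ x]_σ ∈ Z(T)` componentwise: the `M`-entry vanishes, the diagonal entries are
central and act on `M` in the same way, so by faithfulness the `A`-entry vanishes when `x` has no
`B`-part and vice versa. Writing `Θ` through its nine blocks, the commutator is quadratic in `x`,
and every condition is read off by comparing its values at `(a, m, b)` with zero entries and
at their sums. The blocks `A → M` and `B → M` are then pinned down by polarization: if
`F s • L s = 0` for all `s`, with `F`, `L` additive and `F 1 = 1`, then `L = 0`.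
-/

theorem AddMonoidHom.apply_eq_zero_of_forall_map_smul_apply_eq_zero {S T N : Type*}
    [AddZeroClass S] [One S] [Semiring T] [AddCommMonoid N] [Module T N] (F : S →+ T)
    (hF : F 1 = 1) (L : S →+ N) (h : ∀ s, F s • L s = 0) (s : S) : L s = 0 := by
  have h₁ : L 1 = 0 := by simpa [hF] using h 1
  simpa [hF, h₁, h s, add_smul] using h (s + 1)

def IsSigmaCentralizing {𝒜 : Type*} [Ring 𝒜] [Algebra R 𝒜] (σ : 𝒜 ≃ₐ[R] 𝒜) (Θ : 𝒜 →ₗ[R] 𝒜) :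
    Prop :=
  ∀ x y, (σ x * Θ x - Θ x * x) * y = y * (σ x * Θ x - Θ x * x)

namespace Trian

section Center

variable {z : A × M × B}

theorem snd_fst_eq_zero_of_commute (hz : ∀ y, z * y = y * z) : z.2.1 = 0 := by
  simpa [tri_mul_def] using congrArg (fun w : A × M × B => w.2.1) (hz (1, 0, 0)).symm

theorem fst_commute_of_commute (hz : ∀ y, z * y = y * z) (a : A) : z.1 * a = a * z.1 := by
  simpa [tri_mul_def] using congrArg Prod.fst (hz (a, 0, 0))

theorem snd_snd_commute_of_commute (hz : ∀ y, z * y = y * z) (b : B) :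
    z.2.2 * b = b * z.2.2 := by
  simpa [tri_mul_def] using congrArg (fun w : A × M × B => w.2.2) (hz (0, 0, b))

theorem fst_smul_eq_of_commute (hz : ∀ y, z * y = y * z) (m : M) : z.1 • m = op z.2.2 • m := by
  simpa [tri_mul_def, snd_fst_eq_zero_of_commute hz] using
    congrArg (fun w : A × M × B => w.2.1) (hz (0, m, 0))

theorem fst_eq_zero_of_commute [FaithfulSMul A M] (hz : ∀ y, z * y = y * z) (h : z.2.2 = 0) :
    z.1 = 0 :=
  eq_of_smul_eq_smul fun m : M => by
    rw [fst_smul_eq_of_commute hz, h, op_zero, zero_smul, zero_smul]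

theorem snd_snd_eq_zero_of_commute [FaithfulSMul Bᵐᵒᵖ M] (hz : ∀ y, z * y = y * z)
    (h : z.1 = 0) : z.2.2 = 0 :=
  op_injective <| eq_of_smul_eq_smul fun m : M => by
    rw [← fst_smul_eq_of_commute hz, h, op_zero, zero_smul, zero_smul]

end Center

def IsStandardForm (σ : (A × M × B) ≃ₐ[R] (A × M × B)) (f : A ≃ₐ[R] A) (g : B ≃ₐ[R] B) (m₀ : M)
    (ν : M ≃ₗ[R] M) : Prop :=
  ∀ a m b, σ (a, m, b) = (f a, f a • m₀ - op (g b) • m₀ + ν m, g b)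

section Blocks

variable (Θ : (A × M × B) →ₗ[R] (A × M × B))

-- `δ`, `τ`, `μ` land in `A`, `M`, `B`; the subscripts `1`, `2`, `3` mark the source `A`, `M`, `B`.
def δ₁ : A →ₗ[R] A := LinearMap.fst R A (M × B) ∘ₗ Θ ∘ₗ LinearMap.inl R A (M × B)

def δ₂ : M →ₗ[R] A :=
  LinearMap.fst R A (M × B) ∘ₗ Θ ∘ₗ LinearMap.inr R A (M × B) ∘ₗ LinearMap.inl R M B

def δ₃ : B →ₗ[R] A :=
  LinearMap.fst R A (M × B) ∘ₗ Θ ∘ₗ LinearMap.inr R A (M × B) ∘ₗ LinearMap.inr R M B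

def τ₁ : A →ₗ[R] M :=
  LinearMap.fst R M B ∘ₗ LinearMap.snd R A (M × B) ∘ₗ Θ ∘ₗ LinearMap.inl R A (M × B)

def τ₂ : M →ₗ[R] M :=
  LinearMap.fst R M B ∘ₗ LinearMap.snd R A (M × B) ∘ₗ Θ ∘ₗ LinearMap.inr R A (M × B) ∘ₗ
    LinearMap.inl R M B

def τ₃ : B →ₗ[R] M :=
  LinearMap.fst R M B ∘ₗ LinearMap.snd R A (M × B) ∘ₗ Θ ∘ₗ LinearMap.inr R A (M × B) ∘ₗ
    LinearMap.inr R M B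

def μ₁ : A →ₗ[R] B :=
  LinearMap.snd R M B ∘ₗ LinearMap.snd R A (M × B) ∘ₗ Θ ∘ₗ LinearMap.inl R A (M × B)

def μ₂ : M →ₗ[R] B :=
  LinearMap.snd R M B ∘ₗ LinearMap.snd R A (M × B) ∘ₗ Θ ∘ₗ LinearMap.inr R A (M × B) ∘ₗ
    LinearMap.inl R M B

def μ₃ : B →ₗ[R] B :=
  LinearMap.snd R M B ∘ₗ LinearMap.snd R A (M × B) ∘ₗ Θ ∘ₗ LinearMap.inr R A (M × B) ∘ₗ
    LinearMap.inr R M B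

theorem apply_eq_blocks (a : A) (m : M) (b : B) :
    Θ (a, m, b) = (δ₁ Θ a + δ₂ Θ m + δ₃ Θ b, τ₁ Θ a + τ₂ Θ m + τ₃ Θ b,
      μ₁ Θ a + μ₂ Θ m + μ₃ Θ b) := by
  have : ((a, m, b) : A × M × B) = (a, 0, 0) + (0, m, 0) + (0, 0, b) := by simp
  rw [this, map_add, map_add]
  rfl

end Blocks

section SigmaCentralizing

variable {f : A ≃ₐ[R] A} {g : B ≃ₐ[R] B} {m₀ : M} {ν : M ≃ₗ[R] M}
  {σ : (A × M × B) ≃ₐ[R] (A × M × B)} {Θ : (A × M × B) →ₗ[R] (A × M × B)}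

theorem IsStandardForm.apply_mul_sub_mul (hσ : IsStandardForm σ f g m₀ ν) (a : A) (m : M) (b : B)
    (y : A × M × B) :
    σ (a, m, b) * y - y * (a, m, b) = (f a * y.1 - y.1 * a,
      f a • y.2.1 + op y.2.2 • (f a • m₀ - op (g b) • m₀ + ν m) - (y.1 • m + op b • y.2.1),
      g b * y.2.2 - y.2.2 * b) := by
  rw [hσ]
  rfl

theorem snd_fst_blocks_eq (hσ : IsStandardForm σ f g m₀ ν) (hΘ : IsSigmaCentralizing σ Θ)
    (a : A) (m : M) (b : B) :
    f a • (τ₁ Θ a + τ₂ Θ m + τ₃ Θ b) +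
        op (μ₁ Θ a + μ₂ Θ m + μ₃ Θ b) • (f a • m₀ - op (g b) • m₀ + ν m) =
      (δ₁ Θ a + δ₂ Θ m + δ₃ Θ b) • m + op b • (τ₁ Θ a + τ₂ Θ m + τ₃ Θ b) := by
  have := snd_fst_eq_zero_of_commute (hΘ (a, m, b))
  rw [hσ.apply_mul_sub_mul, apply_eq_blocks] at this
  exact sub_eq_zero.mp this

theorem mul_fst_blocks_eq [FaithfulSMul A M] (hσ : IsStandardForm σ f g m₀ ν)
    (hΘ : IsSigmaCentralizing σ Θ) (a : A) (m : M) :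
    f a * (δ₁ Θ a + δ₂ Θ m) = (δ₁ Θ a + δ₂ Θ m) * a := by
  have := fst_eq_zero_of_commute (hΘ (a, m, 0)) (by rw [hσ.apply_mul_sub_mul]; simp)
  rw [hσ.apply_mul_sub_mul, apply_eq_blocks, map_zero, add_zero] at this
  exact sub_eq_zero.mp this

theorem mul_snd_blocks_eq [FaithfulSMul Bᵐᵒᵖ M] (hσ : IsStandardForm σ f g m₀ ν)
    (hΘ : IsSigmaCentralizing σ Θ) (m : M) (b : B) :
    g b * (μ₂ Θ m + μ₃ Θ b) = (μ₂ Θ m + μ₃ Θ b) * b := by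
  have := snd_snd_eq_zero_of_commute (hΘ (0, m, b)) (by rw [hσ.apply_mul_sub_mul]; simp)
  simp only [hσ.apply_mul_sub_mul, apply_eq_blocks, map_zero, zero_add] at this
  exact sub_eq_zero.mp this

theorem fst_blocks_commutator_commute (hσ : IsStandardForm σ f g m₀ ν)
    (hΘ : IsSigmaCentralizing σ Θ) (a : A) (b : B) (x : A) :
    (f a * (δ₁ Θ a + δ₃ Θ b) - (δ₁ Θ a + δ₃ Θ b) * a) * x =
      x * (f a * (δ₁ Θ a + δ₃ Θ b) - (δ₁ Θ a + δ₃ Θ b) * a) := by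
  have := fst_commute_of_commute (hΘ (a, 0, b)) x
  rwa [hσ.apply_mul_sub_mul, apply_eq_blocks, map_zero, add_zero] at this

theorem snd_blocks_commutator_commute (hσ : IsStandardForm σ f g m₀ ν)
    (hΘ : IsSigmaCentralizing σ Θ) (a : A) (b : B) (x : B) :
    (g b * (μ₁ Θ a + μ₃ Θ b) - (μ₁ Θ a + μ₃ Θ b) * b) * x =
      x * (g b * (μ₁ Θ a + μ₃ Θ b) - (μ₁ Θ a + μ₃ Θ b) * b) := by
  have := snd_snd_commute_of_commute (hΘ (a, 0, b)) x
  simp only [hσ.apply_mul_sub_mul, apply_eq_blocks, map_zero, add_zero] at this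
  exact this

theorem mul_δ₁_eq_δ₁_mul [FaithfulSMul A M] (hσ : IsStandardForm σ f g m₀ ν)
    (hΘ : IsSigmaCentralizing σ Θ) (a : A) : f a * δ₁ Θ a = δ₁ Θ a * a := by
  simpa using mul_fst_blocks_eq hσ hΘ a 0

theorem mul_δ₂_eq_δ₂_mul [FaithfulSMul A M] (hσ : IsStandardForm σ f g m₀ ν)
    (hΘ : IsSigmaCentralizing σ Θ) (m : M) (x : A) : f x * δ₂ Θ m = δ₂ Θ m * x := by
  have := mul_fst_blocks_eq hσ hΘ x m
  rwa [mul_add, add_mul, mul_δ₁_eq_δ₁_mul hσ hΘ, add_right_inj] at this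

theorem mul_μ₃_eq_μ₃_mul [FaithfulSMul Bᵐᵒᵖ M] (hσ : IsStandardForm σ f g m₀ ν)
    (hΘ : IsSigmaCentralizing σ Θ) (b : B) : g b * μ₃ Θ b = μ₃ Θ b * b := by
  simpa using mul_snd_blocks_eq hσ hΘ 0 b

theorem mul_μ₂_eq_μ₂_mul [FaithfulSMul Bᵐᵒᵖ M] (hσ : IsStandardForm σ f g m₀ ν)
    (hΘ : IsSigmaCentralizing σ Θ) (m : M) (x : B) : g x * μ₂ Θ m = μ₂ Θ m * x := by
  have := mul_snd_blocks_eq hσ hΘ m x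
  rwa [mul_add, add_mul, mul_μ₃_eq_μ₃_mul hσ hΘ, add_left_inj] at this

theorem δ₃_commutator_commute [FaithfulSMul A M] (hσ : IsStandardForm σ f g m₀ ν)
    (hΘ : IsSigmaCentralizing σ Θ) (a : A) (b : B) (x : A) :
    (f a * δ₃ Θ b - δ₃ Θ b * a) * x = x * (f a * δ₃ Θ b - δ₃ Θ b * a) := by
  have := fst_blocks_commutator_commute hσ hΘ a b x
  rwa [mul_add, add_mul, mul_δ₁_eq_δ₁_mul hσ hΘ, add_sub_add_left_eq_sub] at this

theorem μ₁_commutator_commute [FaithfulSMul Bᵐᵒᵖ M] (hσ : IsStandardForm σ f g m₀ ν)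
    (hΘ : IsSigmaCentralizing σ Θ) (a : A) (b : B) (x : B) :
    (g b * μ₁ Θ a - μ₁ Θ a * b) * x = x * (g b * μ₁ Θ a - μ₁ Θ a * b) := by
  have := snd_blocks_commutator_commute hσ hΘ a b x
  rwa [mul_add, add_mul, mul_μ₃_eq_μ₃_mul hσ hΘ, add_sub_add_right_eq_sub] at this

theorem δ₂_smul_self (hσ : IsStandardForm σ f g m₀ ν) (hΘ : IsSigmaCentralizing σ Θ) (m : M) :
    δ₂ Θ m • m = op (μ₂ Θ m) • ν m := by
  simpa using (snd_fst_blocks_eq hσ hΘ 0 m 0).symm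

theorem τ₁_eq (hσ : IsStandardForm σ f g m₀ ν) (hΘ : IsSigmaCentralizing σ Θ) (a : A) :
    τ₁ Θ a = -(op (μ₁ Θ a) • m₀) := by
  refine eq_neg_of_add_eq_zero_left <|
    AddMonoidHom.apply_eq_zero_of_forall_map_smul_apply_eq_zero
    (f : A →+ A) (map_one f) (AddMonoidHom.mk' (fun a => τ₁ Θ a + op (μ₁ Θ a) • m₀) fun a a' => by
      simp only [map_add, op_add, add_smul]; abel) (fun a => ?_) a
  have := snd_fst_blocks_eq hσ hΘ a 0 0
  simp only [map_zero, add_zero, op_zero, zero_smul, sub_zero, smul_zero] at this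
  rwa [AddMonoidHom.mk'_apply, smul_add, smul_comm, AddMonoidHom.coe_coe]

theorem τ₃_eq [FaithfulSMul Bᵐᵒᵖ M] (hσ : IsStandardForm σ f g m₀ ν)
    (hΘ : IsSigmaCentralizing σ Θ) (b : B) : τ₃ Θ b = -(op (μ₃ Θ b) • m₀) := by
  refine eq_neg_of_add_eq_zero_left <|
    AddMonoidHom.apply_eq_zero_of_forall_map_smul_apply_eq_zero
    (opAddEquiv : B ≃+ Bᵐᵒᵖ).toAddMonoidHom rfl
    (AddMonoidHom.mk' (fun b => τ₃ Θ b + op (μ₃ Θ b) • m₀) fun b b' => by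
      simp only [map_add, op_add, add_smul]; abel) (fun b => ?_) b
  have := snd_fst_blocks_eq hσ hΘ 0 0 b
  simp only [map_zero, add_zero, zero_add, zero_smul, smul_zero] at this
  show op b • (τ₃ Θ b + op (μ₃ Θ b) • m₀) = 0
  rw [smul_add, smul_smul, ← op_mul, ← mul_μ₃_eq_μ₃_mul hσ hΘ, op_mul, mul_smul, ← this,
    zero_sub, smul_neg, neg_add_cancel]

theorem δ₁_smul_eq (hσ : IsStandardForm σ f g m₀ ν) (hΘ : IsSigmaCentralizing σ Θ) (a : A)
    (m : M) :
    δ₁ Θ a • m = f a • τ₂ Θ m + op (μ₂ Θ m) • f a • m₀ + op (μ₁ Θ a) • ν m := by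
  have := snd_fst_blocks_eq hσ hΘ a m 0
  simp only [map_zero, add_zero, op_zero, zero_smul, sub_zero, op_add, smul_add, add_smul] at this
  rw [τ₁_eq hσ hΘ, δ₂_smul_self hσ hΘ, smul_neg, smul_comm (f a) (op (μ₁ Θ a))] at this
  linear_combination (norm := abel) -this

theorem τ₂_add_smul_eq (hσ : IsStandardForm σ f g m₀ ν) (hΘ : IsSigmaCentralizing σ Θ) (m : M) :
    τ₂ Θ m + op (μ₂ Θ m) • m₀ = δ₁ Θ 1 • m - op (μ₁ Θ 1) • ν m := by
  rw [δ₁_smul_eq hσ hΘ, map_one, one_smul, one_smul]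
  abel

theorem δ₁_smul_sub_μ₁_smul (hσ : IsStandardForm σ f g m₀ ν) (hΘ : IsSigmaCentralizing σ Θ)
    (a : A) (m : M) :
    δ₁ Θ a • m - op (μ₁ Θ a) • ν m = f a • (δ₁ Θ 1 • m - op (μ₁ Θ 1) • ν m) := by
  rw [← τ₂_add_smul_eq hσ hΘ, smul_add, smul_comm (f a) (op (μ₂ Θ m)), δ₁_smul_eq hσ hΘ]
  abel

theorem μ₃_smul_sub_δ₃_smul [FaithfulSMul Bᵐᵒᵖ M] (hσ : IsStandardForm σ f g m₀ ν)
    (hΘ : IsSigmaCentralizing σ Θ) (m : M) (b : B) :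
    op (μ₃ Θ b) • ν m - δ₃ Θ b • m = op b • (δ₁ Θ 1 • m - op (μ₁ Θ 1) • ν m) := by
  have hmb := snd_fst_blocks_eq hσ hΘ 0 m b
  have hb := snd_fst_blocks_eq hσ hΘ 0 0 b
  simp only [map_zero, zero_add, add_zero, zero_smul, smul_zero] at hmb hb
  rw [← τ₂_add_smul_eq hσ hΘ, smul_add, smul_smul, ← op_mul, ← mul_μ₂_eq_μ₂_mul hσ hΘ, op_mul,
    mul_smul]
  simp only [op_add, smul_add, add_smul, zero_sub, smul_neg, δ₂_smul_self hσ hΘ] at hmb hb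
  linear_combination (norm := abel) hmb - hb

end SigmaCentralizing

end Trian

theorem sigma_centralizing_map_description_general
    [FaithfulSMul A M] [FaithfulSMul Bᵐᵒᵖ M]
    (f : A ≃ₐ[R] A) (g : B ≃ₐ[R] B) (m₀ : M) (ν : M ≃ₗ[R] M)
    (σ : (A × M × B) ≃ₐ[R] (A × M × B))
    (hσ : ∀ (a : A) (m : M) (b : B),
      σ (a, m, b) = (f a, f a • m₀ - op (g b) • m₀ + ν m, g b))
    (Θ : (A × M × B) →ₗ[R] (A × M × B))
    (hΘ : ∀ x y : A × M × B, (σ x * Θ x - Θ x * x) * y = y * (σ x * Θ x - Θ x * x)) :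
    ∃ (δ₁ : A →ₗ[R] A) (δ₂ : M →ₗ[R] A) (δ₃ : B →ₗ[R] A)
      (μ₁ : A →ₗ[R] B) (μ₂ : M →ₗ[R] B) (μ₃ : B →ₗ[R] B),
      -- δ₂ maps into the f-center of A and μ₂ maps into the g-center of B
      (∀ (m : M) (x : A), f x * δ₂ m = δ₂ m * x) ∧
      (∀ (m : M) (x : B), g x * μ₂ m = μ₂ m * x) ∧
      -- the form of Θ
      (∀ (a : A) (m : M) (b : B),
        Θ (a, m, b) = (δ₁ a + δ₂ m + δ₃ b,
          -(op (μ₁ a + μ₂ m + μ₃ b) • m₀) + δ₁ 1 • m - op (μ₁ 1) • ν m,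
          μ₁ a + μ₂ m + μ₃ b)) ∧
      -- (i)
      (∀ a : A, f a * δ₁ a = δ₁ a * a) ∧
      -- (ii)
      (∀ b : B, g b * μ₃ b = μ₃ b * b) ∧
      -- (iii)
      (∀ (a : A) (m : M),
        δ₁ a • m - op (μ₁ a) • ν m = f a • (δ₁ 1 • m - op (μ₁ 1) • ν m)) ∧
      -- (iv)
      (∀ (m : M) (b : B),
        op (μ₃ b) • ν m - δ₃ b • m = op b • (op (μ₃ 1) • ν m - δ₃ 1 • m)) ∧
      -- (v)
      (∀ m : M, δ₂ m • m = op (μ₂ m) • ν m) ∧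
      -- (vi)
      (∀ m : M, δ₁ 1 • m - op (μ₁ 1) • ν m = op (μ₃ 1) • ν m - δ₃ 1 • m) ∧
      -- (vii)
      (∀ (a : A) (b : B) (x : A),
        (f a * δ₃ b - δ₃ b * a) * x = x * (f a * δ₃ b - δ₃ b * a)) ∧
      -- (viii)
      (∀ (a : A) (b : B) (x : B),
        (g b * μ₁ a - μ₁ a * b) * x = x * (g b * μ₁ a - μ₁ a * b)) := by
  open Trian in
  have hvi : ∀ m : M, δ₁ Θ 1 • m - op (μ₁ Θ 1) • ν m = op (μ₃ Θ 1) • ν m - δ₃ Θ 1 • m :=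
    fun m => by simpa using (μ₃_smul_sub_δ₃_smul hσ hΘ m 1).symm
  refine ⟨δ₁ Θ, δ₂ Θ, δ₃ Θ, μ₁ Θ, μ₂ Θ, μ₃ Θ, mul_δ₂_eq_δ₂_mul hσ hΘ, mul_μ₂_eq_μ₂_mul hσ hΘ,
    fun a m b => ?_, mul_δ₁_eq_δ₁_mul hσ hΘ, mul_μ₃_eq_μ₃_mul hσ hΘ, δ₁_smul_sub_μ₁_smul hσ hΘ,
    fun m b => by rw [μ₃_smul_sub_δ₃_smul hσ hΘ, hvi], δ₂_smul_self hσ hΘ, hvi,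
    δ₃_commutator_commute hσ hΘ, μ₁_commutator_commute hσ hΘ⟩
  rw [apply_eq_blocks, τ₁_eq hσ hΘ, τ₃_eq hσ hΘ, eq_sub_of_add_eq (τ₂_add_smul_eq hσ hΘ m)]
  refine Prod.ext rfl (Prod.ext ?_ rfl)
  simp only [op_add, add_smul]
  abel

/-- Description of σ-centralizing linear maps of a triangular algebra
whose corner algebras have only trivial idempotents, where σ is an automorphism in
standard form with data (f, g, m₀, ν). -/
theorem sigma_centralizing_map_description
    [Nontrivial M] [FaithfulSMul A M] [FaithfulSMul Bᵐᵒᵖ M]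
    (hA : ∀ e : A, e * e = e → e = 0 ∨ e = 1)
    (hB : ∀ e : B, e * e = e → e = 0 ∨ e = 1)
    (f : A ≃ₐ[R] A) (g : B ≃ₐ[R] B) (m₀ : M) (ν : M ≃ₗ[R] M)
    (hν₁ : ∀ (a : A) (m : M), ν (a • m) = f a • ν m)
    (hν₂ : ∀ (m : M) (b : B), ν (op b • m) = op (g b) • ν m)
    (σ : (A × M × B) ≃ₐ[R] (A × M × B))
    (hσ : ∀ (a : A) (m : M) (b : B),
      σ (a, m, b) = (f a, f a • m₀ - op (g b) • m₀ + ν m, g b))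
    (Θ : (A × M × B) →ₗ[R] (A × M × B))
    (hΘ : ∀ x y : A × M × B, (σ x * Θ x - Θ x * x) * y = y * (σ x * Θ x - Θ x * x)) :
    ∃ (δ₁ : A →ₗ[R] A) (δ₂ : M →ₗ[R] A) (δ₃ : B →ₗ[R] A)
      (μ₁ : A →ₗ[R] B) (μ₂ : M →ₗ[R] B) (μ₃ : B →ₗ[R] B),
      -- δ₂ maps into the f-center of A and μ₂ maps into the g-center of B
      (∀ (m : M) (x : A), f x * δ₂ m = δ₂ m * x) ∧
      (∀ (m : M) (x : B), g x * μ₂ m = μ₂ m * x) ∧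
      -- the form of Θ
      (∀ (a : A) (m : M) (b : B),
        Θ (a, m, b) = (δ₁ a + δ₂ m + δ₃ b,
          -(op (μ₁ a + μ₂ m + μ₃ b) • m₀) + δ₁ 1 • m - op (μ₁ 1) • ν m,
          μ₁ a + μ₂ m + μ₃ b)) ∧
      -- (i)
      (∀ a : A, f a * δ₁ a = δ₁ a * a) ∧
      -- (ii)
      (∀ b : B, g b * μ₃ b = μ₃ b * b) ∧
      -- (iii)
      (∀ (a : A) (m : M),
        δ₁ a • m - op (μ₁ a) • ν m = f a • (δ₁ 1 • m - op (μ₁ 1) • ν m)) ∧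
      -- (iv)
      (∀ (m : M) (b : B),
        op (μ₃ b) • ν m - δ₃ b • m = op b • (op (μ₃ 1) • ν m - δ₃ 1 • m)) ∧
      -- (v)
      (∀ m : M, δ₂ m • m = op (μ₂ m) • ν m) ∧
      -- (vi)
      (∀ m : M, δ₁ 1 • m - op (μ₁ 1) • ν m = op (μ₃ 1) • ν m - δ₃ 1 • m) ∧
      -- (vii)
      (∀ (a : A) (b : B) (x : A),
        (f a * δ₃ b - δ₃ b * a) * x = x * (f a * δ₃ b - δ₃ b * a)) ∧
      -- (viii)
      (∀ (a : A) (b : B) (x : B),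
        (g b * μ₁ a - μ₁ a * b) * x = x * (g b * μ₁ a - μ₁ a * b)) :=
  sigma_centralizing_map_description_general f g m₀ ν σ hσ Θ hΘ
end

section
/- Let T = Trian(A, M, B) be a triangular algebra over R. Then every centralizing R-linear map Θ of T can be written as Θ(a, m, b) = (δ₁(a) + δ₂(m) + δ₃(b), δ₁(1_A)·m − m·μ₁(1_A), μ₁(a) + μ₂(m) + μ₃(b)), where δ₁ : A → A, δ₂ : M → Z(A), δ₃ : B → A, μ₁ : A → B, μ₂ : M → Z(B), μ₃ : B → B are R-linear maps satisfying, for all a ∈ A, m ∈ M, b ∈ B: (i) δ₁ is a commuting map of A; (ii) μ₃ is a commuting map of B; (iii) δ₁(a)·m − m·μ₁(a) = a·(δ₁(1_A)·m − m·μ₁(1_A)); (iv) m·μ₃(b) − δ₃(b)·m = (m·μ₃(1_B) − δ₃(1_B)·m)·b; (v) δ₂(m)·m = m·μ₂(m); (vi) δ₁(1_A)·m − m·μ₁(1_A) = m·μ₃(1_B) − δ₃(1_B)·m; (vii) aδ₃(b) − δ₃(b)a ∈ Z(A); (viii) bμ₁(a) − μ₁(a)b ∈ Z(B). -/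
/-!
Triangular algebras `Trian(A, M, B)` realized on the type `A × M × B`, where `A`, `B` are
unital associative `R`-algebras and `M` is an `(A, B)`-bimodule (a left `A`-module and a
right `B`-module, the right action being encoded as a left `Bᵐᵒᵖ`-action, written
`op b • m`, with the two actions commuting), compatible with the `R`-module structure.
-/

set_option linter.unusedSectionVars false

open MulOpposite

variable {R A B M : Type*} [CommRing R] [Ring A] [Ring B]
  [Algebra R A] [Algebra R B]
  [AddCommGroup M] [Module R M]
  [Module A M] [Module Bᵐᵒᵖ M]
  [SMulCommClass A Bᵐᵒᵖ M]
  [IsScalarTower R A M] [SMulCommClass R A M]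
  [IsScalarTower R Bᵐᵒᵖ M] [SMulCommClass R Bᵐᵒᵖ M]

/-- Description of centralizing linear maps of a triangular algebra. -/
theorem centralizing_map_description
    [Nontrivial M] [FaithfulSMul A M] [FaithfulSMul Bᵐᵒᵖ M]
    (Θ : (A × M × B) →ₗ[R] (A × M × B))
    (hΘ : ∀ x y : A × M × B, (Θ x * x - x * Θ x) * y = y * (Θ x * x - x * Θ x)) :
    ∃ (δ₁ : A →ₗ[R] A) (δ₂ : M →ₗ[R] A) (δ₃ : B →ₗ[R] A)
      (μ₁ : A →ₗ[R] B) (μ₂ : M →ₗ[R] B) (μ₃ : B →ₗ[R] B),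
      -- δ₂ maps into Z(A) and μ₂ maps into Z(B)
      (∀ (m : M) (x : A), δ₂ m * x = x * δ₂ m) ∧
      (∀ (m : M) (x : B), μ₂ m * x = x * μ₂ m) ∧
      -- the form of Θ
      (∀ (a : A) (m : M) (b : B),
        Θ (a, m, b) = (δ₁ a + δ₂ m + δ₃ b,
          δ₁ 1 • m - op (μ₁ 1) • m,
          μ₁ a + μ₂ m + μ₃ b)) ∧
      -- (i) δ₁ is a commuting map of A
      (∀ a : A, δ₁ a * a = a * δ₁ a) ∧
      -- (ii) μ₃ is a commuting map of B
      (∀ b : B, μ₃ b * b = b * μ₃ b) ∧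
      -- (iii)
      (∀ (a : A) (m : M),
        δ₁ a • m - op (μ₁ a) • m = a • (δ₁ 1 • m - op (μ₁ 1) • m)) ∧
      -- (iv)
      (∀ (m : M) (b : B),
        op (μ₃ b) • m - δ₃ b • m = op b • (op (μ₃ 1) • m - δ₃ 1 • m)) ∧
      -- (v)
      (∀ m : M, δ₂ m • m = op (μ₂ m) • m) ∧
      -- (vi)
      (∀ m : M, δ₁ 1 • m - op (μ₁ 1) • m = op (μ₃ 1) • m - δ₃ 1 • m) ∧
      -- (vii)
      (∀ (a : A) (b : B) (x : A),
        (a * δ₃ b - δ₃ b * a) * x = x * (a * δ₃ b - δ₃ b * a)) ∧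
      -- (viii)
      (∀ (a : A) (b : B) (x : B),
        (b * μ₁ a - μ₁ a * b) * x = x * (b * μ₁ a - μ₁ a * b)) := by
  classical
  -- injections
  set ιA : A →ₗ[R] A × M × B := LinearMap.inl R A (M × B) with hιA
  set ιM : M →ₗ[R] A × M × B :=
    (LinearMap.inr R A (M × B)).comp (LinearMap.inl R M B) with hιM
  set ιB : B →ₗ[R] A × M × B :=
    (LinearMap.inr R A (M × B)).comp (LinearMap.inr R M B) with hιB
  set πA : A × M × B →ₗ[R] A := LinearMap.fst R A (M × B) with hπA
  set πM : A × M × B →ₗ[R] M :=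
    (LinearMap.fst R M B).comp (LinearMap.snd R A (M × B)) with hπM
  set πB : A × M × B →ₗ[R] B :=
    (LinearMap.snd R M B).comp (LinearMap.snd R A (M × B)) with hπB
  set δ₁ : A →ₗ[R] A := (πA.comp Θ).comp ιA with hδ₁
  set δ₂ : M →ₗ[R] A := (πA.comp Θ).comp ιM with hδ₂
  set δ₃ : B →ₗ[R] A := (πA.comp Θ).comp ιB with hδ₃
  set μ₁ : A →ₗ[R] B := (πB.comp Θ).comp ιA with hμ₁
  set μ₂ : M →ₗ[R] B := (πB.comp Θ).comp ιM with hμ₂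
  set μ₃ : B →ₗ[R] B := (πB.comp Θ).comp ιB with hμ₃
  have eδ₁ : ∀ a : A, δ₁ a = (Θ (a, 0, 0)).1 := fun a => rfl
  have eδ₂ : ∀ m : M, δ₂ m = (Θ (0, m, 0)).1 := fun m => rfl
  have eδ₃ : ∀ b : B, δ₃ b = (Θ (0, 0, b)).1 := fun b => rfl
  have eμ₁ : ∀ a : A, μ₁ a = (Θ (a, 0, 0)).2.2 := fun a => rfl
  have eμ₂ : ∀ m : M, μ₂ m = (Θ (0, m, 0)).2.2 := fun m => rfl
  have eμ₃ : ∀ b : B, μ₃ b = (Θ (0, 0, b)).2.2 := fun b => rfl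
  -- the middle components
  set g₁ : A → M := fun a => (Θ (a, 0, 0)).2.1 with hg₁
  set g₂ : M → M := fun m => (Θ (0, m, 0)).2.1 with hg₂
  set g₃ : B → M := fun b => (Θ (0, 0, b)).2.1 with hg₃
  -- decomposition of Θ
  have hdec : ∀ (a : A) (m : M) (b : B),
      Θ (a, m, b) = (δ₁ a + δ₂ m + δ₃ b, g₁ a + g₂ m + g₃ b, μ₁ a + μ₂ m + μ₃ b) := by
    intro a m b
    have h : ((a, m, b) : A × M × B) = (a, 0, 0) + (0, m, 0) + (0, 0, b) := by
      simp [Prod.ext_iff]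
    rw [h, map_add, map_add]
    refine Prod.ext ?_ (Prod.ext ?_ ?_) <;> simp [eδ₁, eδ₂, eδ₃, eμ₁, eμ₂, eμ₃, hg₁, hg₂, hg₃]
  -- commutator facts extracted from hΘ
  have hfst : ∀ x y : A × M × B,
      ((Θ x).1 * x.1 - x.1 * (Θ x).1) * y.1 = y.1 * ((Θ x).1 * x.1 - x.1 * (Θ x).1) := by
    intro x y
    have h := congrArg Prod.fst (hΘ x y)
    simpa [tri_mul_def, Prod.fst_sub] using h
  have hsnd : ∀ x y : A × M × B,
      ((Θ x).2.2 * x.2.2 - x.2.2 * (Θ x).2.2) * y.2.2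
        = y.2.2 * ((Θ x).2.2 * x.2.2 - x.2.2 * (Θ x).2.2) := by
    intro x y
    have h := congrArg (fun t : A × M × B => t.2.2) (hΘ x y)
    simpa [tri_mul_def, Prod.snd_sub] using h
  have hmid : ∀ x : A × M × B,
      (Θ x).1 • x.2.1 + op x.2.2 • (Θ x).2.1
        - (x.1 • (Θ x).2.1 + op (Θ x).2.2 • x.2.1) = 0 := by
    intro x
    have h := congrArg (fun t : A × M × B => t.2.1) (hΘ x (1, 0, 0))
    simp only [tri_mul_def, Prod.snd_sub, Prod.fst_sub] at h
    simpa using h.symm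
  have hact : ∀ (x : A × M × B) (n : M),
      ((Θ x).1 * x.1 - x.1 * (Θ x).1) • n
        = op ((Θ x).2.2 * x.2.2 - x.2.2 * (Θ x).2.2) • n := by
    intro x n
    have h := congrArg (fun t : A × M × B => t.2.1) (hΘ x (0, n, 0))
    simp only [tri_mul_def, Prod.snd_sub, Prod.fst_sub] at h
    simpa using h
  -- faithfulness helpers
  have fA : ∀ z : A, (∀ n : M, z • n = 0) → z = 0 := by
    intro z hz
    refine FaithfulSMul.eq_of_smul_eq_smul (α := M) fun n => ?_
    rw [hz n, zero_smul]
  have fB : ∀ z : B, (∀ n : M, op z • n = 0) → z = 0 := by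
    intro z hz
    have : op z = (0 : Bᵐᵒᵖ) := by
      refine FaithfulSMul.eq_of_smul_eq_smul (α := M) fun n => ?_
      rw [hz n, zero_smul]
    simpa using congrArg unop this
  have hΘ0 : Θ (0, 0, 0) = 0 := map_zero Θ
  have hg10 : g₁ 0 = 0 := by simp [hg₁, hΘ0]
  have hg20 : g₂ 0 = 0 := by simp [hg₂, hΘ0]
  have hg30 : g₃ 0 = 0 := by simp [hg₃, hΘ0]
  -- middle equation specialized
  have hmid' : ∀ (a : A) (m : M) (b : B),
      (δ₁ a + δ₂ m + δ₃ b) • m + op b • (g₁ a + g₂ m + g₃ b)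
        - (a • (g₁ a + g₂ m + g₃ b) + op (μ₁ a + μ₂ m + μ₃ b) • m) = 0 := by
    intro a m b
    have h := hmid (a, m, b)
    rw [hdec a m b] at h
    exact h
  -- g₁ = 0
  have hg1z : ∀ a : A, g₁ a = 0 := by
    have key : ∀ a : A, a • g₁ a = 0 := by
      intro a
      have h := hmid' a 0 0
      simpa [hg20, hg30] using h
    have h1 : g₁ 1 = 0 := by simpa using key 1
    intro a
    have h := key (a + 1)
    have hadd : g₁ (a + 1) = g₁ a + g₁ 1 := by
      have : ((a + 1 : A), (0 : M), (0 : B)) = ((a, 0, 0) : A × M × B) + (1, 0, 0) := by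
        simp [Prod.ext_iff]
      simp only [hg₁]
      rw [this, map_add]
      rfl
    rw [hadd, h1, add_zero, add_smul, key a, one_smul, zero_add] at h
    exact h
  -- g₃ = 0
  have hg3z : ∀ b : B, g₃ b = 0 := by
    have key : ∀ b : B, op b • g₃ b = 0 := by
      intro b
      have h := hmid' 0 0 b
      simpa [hg10, hg20] using h
    have h1 : g₃ 1 = 0 := by simpa using key 1
    intro b
    have h := key (b + 1)
    have hadd : g₃ (b + 1) = g₃ b + g₃ 1 := by
      have : ((0 : A), (0 : M), b + 1) = ((0, 0, b) : A × M × B) + (0, 0, 1) := by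
        simp [Prod.ext_iff]
      simp only [hg₃]
      rw [this, map_add]
      rfl
    rw [hadd, h1, add_zero, op_add, add_smul, key b, op_one, one_smul, zero_add] at h
    exact h
  -- (v)
  have hv : ∀ m : M, δ₂ m • m = op (μ₂ m) • m := by
    intro m
    have h := hmid' 0 m 0
    simp only [map_zero, zero_add, add_zero, zero_smul, op_zero, hg1z, hg3z] at h
    rw [sub_eq_zero] at h
    simpa using h
  -- (iii) with g₂
  have hiii' : ∀ (a : A) (m : M), δ₁ a • m - op (μ₁ a) • m = a • g₂ m := by
    intro a m
    have h := hmid' a m 0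
    simp only [map_zero, add_zero, zero_smul, op_zero, zero_add, hg1z, hg3z] at h
    rw [sub_eq_zero] at h
    rw [add_smul, op_add, add_smul, hv m] at h
    linear_combination (norm := abel) h
  have hg2 : ∀ m : M, g₂ m = δ₁ 1 • m - op (μ₁ 1) • m := by
    intro m
    have h := hiii' 1 m
    rw [one_smul] at h
    exact h.symm
  -- (iv) with g₂
  have hiv' : ∀ (m : M) (b : B), op (μ₃ b) • m - δ₃ b • m = op b • g₂ m := by
    intro m b
    have h := hmid' 0 m b
    simp only [map_zero, zero_add, zero_smul, op_zero, add_zero, hg1z, hg3z] at h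
    rw [sub_eq_zero] at h
    rw [add_smul, op_add, add_smul, hv m] at h
    linear_combination (norm := abel) -h
  have hg2' : ∀ m : M, g₂ m = op (μ₃ 1) • m - δ₃ 1 • m := by
    intro m
    have h := hiv' m 1
    rw [op_one, one_smul] at h
    exact h.symm
  -- (i)
  have hi : ∀ a : A, δ₁ a * a = a * δ₁ a := by
    intro a
    have h : ∀ n : M, (δ₁ a * a - a * δ₁ a) • n = 0 := by
      intro n
      have h := hact (a, 0, 0) n
      simp only [eδ₁, eμ₁] at h ⊢
      simpa using h
    have := fA _ h
    rwa [sub_eq_zero] at this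
  -- (ii)
  have hii : ∀ b : B, μ₃ b * b = b * μ₃ b := by
    intro b
    have h : ∀ n : M, op (μ₃ b * b - b * μ₃ b) • n = 0 := by
      intro n
      have h := hact (0, 0, b) n
      simp only [eδ₃, eμ₃] at h ⊢
      simpa using h.symm
    have := fB _ h
    rwa [sub_eq_zero] at this
  -- δ₂ into Z(A)
  have hZA : ∀ (m : M) (x : A), δ₂ m * x = x * δ₂ m := by
    intro m a
    have h : ∀ n : M, (δ₂ m * a - a * δ₂ m) • n = 0 := by
      intro n
      have h := hact (a, m, 0) n
      rw [hdec a m 0] at h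
      simp only [map_zero, add_zero, zero_add] at h
      have h2 : ((δ₁ a + δ₂ m) * a - a * (δ₁ a + δ₂ m)) • n = 0 := by
        simpa using h
      have h3 : (δ₁ a + δ₂ m) * a - a * (δ₁ a + δ₂ m)
          = δ₂ m * a - a * δ₂ m := by
        rw [add_mul, mul_add, hi a]
        abel
      rwa [h3] at h2
    have := fA _ h
    rwa [sub_eq_zero] at this
  -- μ₂ into Z(B)
  have hZB : ∀ (m : M) (x : B), μ₂ m * x = x * μ₂ m := by
    intro m b
    have h : ∀ n : M, op (μ₂ m * b - b * μ₂ m) • n = 0 := by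
      intro n
      have h := hact (0, m, b) n
      rw [hdec 0 m b] at h
      simp only [map_zero, zero_add, add_zero] at h
      have h2 : op ((μ₂ m + μ₃ b) * b - b * (μ₂ m + μ₃ b)) • n = 0 := by
        simpa using h.symm
      have h3 : (μ₂ m + μ₃ b) * b - b * (μ₂ m + μ₃ b)
          = μ₂ m * b - b * μ₂ m := by
        rw [add_mul, mul_add, hii b]
        abel
      rwa [h3] at h2
    have := fB _ h
    rwa [sub_eq_zero] at this
  -- (vii)
  have hvii : ∀ (a : A) (b : B) (x : A),
      (a * δ₃ b - δ₃ b * a) * x = x * (a * δ₃ b - δ₃ b * a) := by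
    intro a b x
    have h := hfst (a, 0, b) (x, 0, 0)
    rw [hdec a 0 b] at h
    simp only [map_zero, add_zero, zero_add] at h
    have h3 : (δ₁ a + δ₃ b) * a - a * (δ₁ a + δ₃ b)
        = -(a * δ₃ b - δ₃ b * a) := by
      rw [add_mul, mul_add, hi a]
      abel
    rw [h3, neg_mul, mul_neg, neg_inj] at h
    exact h
  -- (viii)
  have hviii : ∀ (a : A) (b : B) (x : B),
      (b * μ₁ a - μ₁ a * b) * x = x * (b * μ₁ a - μ₁ a * b) := by
    intro a b x
    have h := hsnd (a, 0, b) (0, 0, x)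
    rw [hdec a 0 b] at h
    simp only [map_zero, add_zero, zero_add] at h
    have h3 : (μ₁ a + μ₃ b) * b - b * (μ₁ a + μ₃ b)
        = -(b * μ₁ a - μ₁ a * b) := by
      rw [add_mul, mul_add, hii b]
      abel
    rw [h3, neg_mul, mul_neg, neg_inj] at h
    exact h
  refine ⟨δ₁, δ₂, δ₃, μ₁, μ₂, μ₃, hZA, hZB, ?_, hi, hii, ?_, ?_, hv, ?_, hvii, hviii⟩
  · intro a m b
    rw [hdec a m b, hg1z, hg3z, hg2 m]
    simp
  · intro a m
    rw [hiii' a m, hg2 m]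
  · intro m b
    rw [hiv' m b, hg2' m]
  · intro m
    rw [← hg2 m, hg2' m]
end

section
/- Let T = Trian(A, M, B) be a triangular algebra over R in which A and B have only trivial idempotents, let σ be an automorphism of T given in standard form with data (f, g, m₀, ν), and let Θ be a σ-centralizing R-linear map of T. Define δ₃ : B → A by letting δ₃(b) be the A-component of Θ(0, 0, b), and μ₁ : A → B by letting μ₁(a) be the B-component of Θ(a, 0, 0). Then Θ is σ-commuting if and only if δ₃(B) ⊆ Z_f(A) and μ₁(A) ⊆ Z_g(B). -/
/-!
Triangular algebras `Trian(A, M, B)` realized on the type `A × M × B`, where `A`, `B` are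
unital associative `R`-algebras and `M` is an `(A, B)`-bimodule (a left `A`-module and a
right `B`-module, the right action being encoded as a left `Bᵐᵒᵖ`-action, written
`op b • m`, with the two actions commuting), compatible with the `R`-module structure.
-/

set_option linter.unusedSectionVars false

open MulOpposite

variable {R A B M : Type*} [CommRing R] [Ring A] [Ring B]
  [Algebra R A] [Algebra R B]
  [AddCommGroup M] [Module R M]
  [Module A M] [Module Bᵐᵒᵖ M]
  [SMulCommClass A Bᵐᵒᵖ M]
  [IsScalarTower R A M] [SMulCommClass R A M]
  [IsScalarTower R Bᵐᵒᵖ M] [SMulCommClass R Bᵐᵒᵖ M]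

/-- A σ-centralizing map Θ of a triangular algebra is σ-commuting iff
the A-component of Θ on B lands in the f-center of A and the B-component of Θ on A lands
in the g-center of B. -/
theorem sigma_centralizing_is_sigma_commuting_iff
    [Nontrivial M] [FaithfulSMul A M] [FaithfulSMul Bᵐᵒᵖ M]
    (hA : ∀ e : A, e * e = e → e = 0 ∨ e = 1)
    (hB : ∀ e : B, e * e = e → e = 0 ∨ e = 1)
    (f : A ≃ₐ[R] A) (g : B ≃ₐ[R] B) (m₀ : M) (ν : M ≃ₗ[R] M)
    (hν₁ : ∀ (a : A) (m : M), ν (a • m) = f a • ν m)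
    (hν₂ : ∀ (m : M) (b : B), ν (op b • m) = op (g b) • ν m)
    (σ : (A × M × B) ≃ₐ[R] (A × M × B))
    (hσ : ∀ (a : A) (m : M) (b : B),
      σ (a, m, b) = (f a, f a • m₀ - op (g b) • m₀ + ν m, g b))
    (Θ : (A × M × B) →ₗ[R] (A × M × B))
    (hΘ : ∀ x y : A × M × B, (σ x * Θ x - Θ x * x) * y = y * (σ x * Θ x - Θ x * x)) :
    (∀ x : A × M × B, σ x * Θ x = Θ x * x) ↔
      ((∀ (b : B) (x : A), f x * (Θ (0, 0, b)).1 = (Θ (0, 0, b)).1 * x) ∧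
       (∀ (a : A) (x : B), g x * (Θ (a, 0, 0)).2.2 = (Θ (a, 0, 0)).2.2 * x)) := by
  classical
  -- Central elements with vanishing A-component are zero
  have cent1 : ∀ z : A × M × B, (∀ y, z * y = y * z) → z.1 = 0 → z = 0 := by
    intro z hz h1
    have hm : z.2.1 = 0 := by
      have h := congrArg (fun t : A × M × B => t.2.1) (hz (1, 0, 0))
      simp [tri_mul_def] at h
      exact h.symm
    have hb : z.2.2 = 0 := by
      have key : ∀ m : M, op z.2.2 • m = op (0 : B) • m := by
        intro m
        have h := congrArg (fun t : A × M × B => t.2.1) (hz (0, m, 0))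
        simp [tri_mul_def, h1, hm] at h
        simpa using h.symm
      exact op_injective (eq_of_smul_eq_smul key)
    exact Prod.ext h1 (Prod.ext hm hb)
  have cent3 : ∀ z : A × M × B, (∀ y, z * y = y * z) → z.2.2 = 0 → z = 0 := by
    intro z hz hb
    refine cent1 z hz ?_
    have hm : z.2.1 = 0 := by
      have h := congrArg (fun t : A × M × B => t.2.1) (hz (1, 0, 0))
      simp [tri_mul_def] at h
      exact h.symm
    have key : ∀ m : M, z.1 • m = (0 : A) • m := by
      intro m
      have h := congrArg (fun t : A × M × B => t.2.1) (hz (0, m, 0))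
      simp [tri_mul_def, hb, hm] at h
      simpa using h
    exact eq_of_smul_eq_smul key
  constructor
  · intro H
    constructor
    · intro b x
      have hadd : Θ (x, (0:M), b) = Θ (x, 0, 0) + Θ (0, 0, b) := by
        rw [← map_add]
        congr 1
        simp [Prod.ext_iff]
      have h1 := congrArg Prod.fst (H (x, 0, b))
      have h2 := congrArg Prod.fst (H (x, 0, 0))
      simp [tri_mul_def, hσ, hadd, mul_add, add_mul] at h1 h2
      rw [h2] at h1
      exact add_left_cancel h1
    · intro a x
      have hadd : Θ (a, (0:M), x) = Θ (a, 0, 0) + Θ (0, 0, x) := by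
        rw [← map_add]
        congr 1
        simp [Prod.ext_iff]
      have h1 := congrArg (fun t : A × M × B => t.2.2) (H (a, 0, x))
      have h2 := congrArg (fun t : A × M × B => t.2.2) (H (0, 0, x))
      simp [tri_mul_def, hσ, hadd, mul_add, add_mul] at h1 h2
      rw [h2] at h1
      exact add_right_cancel h1
  · rintro ⟨hδ, -⟩ ⟨a, m, b⟩
    rw [← sub_eq_zero]
    have step2 : σ (a, m, 0) * Θ (a, m, 0) - Θ (a, m, 0) * (a, m, (0:B)) = 0 := by
      refine cent3 _ (hΘ _) ?_
      simp [tri_mul_def, hσ]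
    have e2 : f a * (Θ (a, m, (0:B))).1 = (Θ (a, m, (0:B))).1 * a := by
      have h := congrArg Prod.fst step2
      simp [tri_mul_def, hσ, sub_eq_zero] at h
      exact h
    refine cent1 _ (hΘ _) ?_
    have hadd : Θ (a, m, b) = Θ (a, m, 0) + Θ (0, 0, b) := by
      rw [← map_add]
      congr 1
      simp [Prod.ext_iff]
    simp [tri_mul_def, hσ, hadd, mul_add, add_mul, e2, hδ b a, sub_eq_zero]
end

section
/- Let T = Trian(A, M, B) be a triangular algebra over R and let Θ be a centralizing R-linear map of T. Define δ₃ : B → A by letting δ₃(b) be the A-component of Θ(0, 0, b), and μ₁ : A → B by letting μ₁(a) be the B-component of Θ(a, 0, 0). Then Θ is commuting if and only if δ₃(B) ⊆ Z(A) and μ₁(A) ⊆ Z(B). -/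
/-!
Triangular algebras `Trian(A, M, B)` realized on the type `A × M × B`, where `A`, `B` are
unital associative `R`-algebras and `M` is an `(A, B)`-bimodule (a left `A`-module and a
right `B`-module, the right action being encoded as a left `Bᵐᵒᵖ`-action, written
`op b • m`, with the two actions commuting), compatible with the `R`-module structure.
-/

set_option linter.unusedSectionVars false

open MulOpposite

variable {R A B M : Type*} [CommRing R] [Ring A] [Ring B]
  [Algebra R A] [Algebra R B]
  [AddCommGroup M] [Module R M]
  [Module A M] [Module Bᵐᵒᵖ M]
  [SMulCommClass A Bᵐᵒᵖ M]
  [IsScalarTower R A M] [SMulCommClass R A M]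
  [IsScalarTower R Bᵐᵒᵖ M] [SMulCommClass R Bᵐᵒᵖ M]

/-- A centralizing map Θ of a triangular algebra is commuting iff
the A-component of Θ on B lands in Z(A) and the B-component of Θ on A lands in Z(B). -/
theorem centralizing_is_commuting_iff
    [Nontrivial M] [FaithfulSMul A M] [FaithfulSMul Bᵐᵒᵖ M]
    (Θ : (A × M × B) →ₗ[R] (A × M × B))
    (hΘ : ∀ x y : A × M × B, (Θ x * x - x * Θ x) * y = y * (Θ x * x - x * Θ x)) :
    (∀ x : A × M × B, Θ x * x = x * Θ x) ↔
      ((∀ (b : B) (x : A), (Θ (0, 0, b)).1 * x = x * (Θ (0, 0, b)).1) ∧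
       (∀ (a : A) (x : B), (Θ (a, 0, 0)).2.2 * x = x * (Θ (a, 0, 0)).2.2)) := by
  -- helpers about elements commuting with everything
  have hc1 : ∀ z : A × M × B, (∀ y, z * y = y * z) → z.2.1 = 0 := by
    intro z h
    have := congrArg (fun t : A × M × B => t.2.1) (h (1, 0, 0))
    simpa [tri_mul_def] using this.symm
  have hc2 : ∀ z : A × M × B, (∀ y, z * y = y * z) →
      ∀ m : M, z.1 • m = op z.2.2 • m := by
    intro z h m
    have := congrArg (fun t : A × M × B => t.2.1) (h (0, m, 0))
    simpa [tri_mul_def] using this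
  have hzA : ∀ z : A × M × B, (∀ y, z * y = y * z) → z.2.2 = 0 → z = 0 := by
    intro z h h2
    have h1 : z.1 = 0 := by
      refine eq_of_smul_eq_smul (α := M) fun m => ?_
      rw [hc2 z h m, h2]; simp
    exact Prod.ext h1 (Prod.ext (hc1 z h) h2)
  have hzB : ∀ z : A × M × B, (∀ y, z * y = y * z) → z.1 = 0 → z = 0 := by
    intro z h h1
    have h2 : z.2.2 = 0 := by
      have : op z.2.2 = op (0 : B) := by
        refine eq_of_smul_eq_smul (α := M) fun m => ?_
        rw [← hc2 z h m, h1]; simp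
      exact op_injective this
    exact Prod.ext h1 (Prod.ext (hc1 z h) h2)
  constructor
  · intro hcomm
    have lin : ∀ u v : A × M × B,
        Θ u * v + Θ v * u = v * Θ u + u * Θ v := by
      intro u v
      have key : Θ u * v + Θ v * u - (v * Θ u + u * Θ v)
          = (Θ (u + v) * (u + v) - (u + v) * Θ (u + v))
            - (Θ u * u - u * Θ u) - (Θ v * v - v * Θ v) := by
        simp only [map_add, add_mul, mul_add]; abel
      rw [hcomm (u + v), hcomm u, hcomm v] at key
      simp only [sub_self, sub_zero] at key
      exact sub_eq_zero.mp key
    constructor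
    · intro b a
      have := congrArg (fun t : A × M × B => t.1) (lin (0, 0, b) (a, 0, 0))
      simpa [tri_mul_def] using this
    · intro a b
      have := congrArg (fun t : A × M × B => t.2.2) (lin (a, 0, 0) (0, 0, b))
      simpa [tri_mul_def] using this
  · rintro ⟨hδ, hμ⟩ x
    rw [← sub_eq_zero]
    set x₁ : A × M × B := (x.1, 0, 0) with hx₁
    set x₂ : A × M × B := (0, x.2.1, 0) with hx₂
    set x₃ : A × M × B := (0, 0, x.2.2) with hx₃
    have hx : x = x₁ + x₂ + x₃ := by
      refine Prod.ext ?_ (Prod.ext ?_ ?_) <;>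
        simp [hx₁, hx₂, hx₃, Prod.fst_add, Prod.snd_add]
    set D : (A × M × B) → (A × M × B) → (A × M × B) :=
      fun u v => Θ u * v - v * Θ u with hD
    -- each D u u is trivially central
    have hDc : ∀ u, ∀ y, D u u * y = y * D u u := fun u y => hΘ u y
    -- linearized terms are central
    have hBkey : ∀ u v : A × M × B, D u v + D v u
        = (Θ (u + v) * (u + v) - (u + v) * Θ (u + v))
          - (Θ u * u - u * Θ u) - (Θ v * v - v * Θ v) := by
      intro u v
      simp only [hD, map_add, add_mul, mul_add]; abel
    have hBc : ∀ u v : A × M × B, ∀ y,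
        (D u v + D v u) * y = y * (D u v + D v u) := by
      intro u v y
      rw [hBkey]
      simp only [sub_mul, mul_sub, hΘ (u + v) y, hΘ u y, hΘ v y]
    -- component computations
    have hfst : ∀ u v : A × M × B, (D u v).1 = (Θ u).1 * v.1 - v.1 * (Θ u).1 := by
      intro u v; simp [hD, tri_mul_def]
    have hsnd : ∀ u v : A × M × B,
        (D u v).2.2 = (Θ u).2.2 * v.2.2 - v.2.2 * (Θ u).2.2 := by
      intro u v; simp [hD, tri_mul_def]
    -- the six pieces vanish
    have h11 : D x₁ x₁ = 0 := by
      refine hzA _ (hDc x₁) ?_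
      rw [hsnd]; simp [hx₁]
    have h22 : D x₂ x₂ = 0 := by
      refine hzB _ (hDc x₂) ?_
      rw [hfst]; simp [hx₂]
    have h33 : D x₃ x₃ = 0 := by
      refine hzB _ (hDc x₃) ?_
      rw [hfst]; simp [hx₃]
    have h12 : D x₁ x₂ + D x₂ x₁ = 0 := by
      refine hzA _ (hBc x₁ x₂) ?_
      rw [Prod.snd_add, Prod.snd_add, hsnd, hsnd]; simp [hx₁, hx₂]
    have h23 : D x₂ x₃ + D x₃ x₂ = 0 := by
      refine hzB _ (hBc x₂ x₃) ?_
      rw [Prod.fst_add, hfst, hfst]; simp [hx₂, hx₃]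
    have h13 : D x₁ x₃ + D x₃ x₁ = 0 := by
      refine hzA _ (hBc x₁ x₃) ?_
      rw [Prod.snd_add, Prod.snd_add, hsnd, hsnd]
      have h1 : (Θ x₁).2.2 * x₃.2.2 - x₃.2.2 * (Θ x₁).2.2 = 0 := by
        rw [sub_eq_zero]; exact hμ x.1 x.2.2
      have h2 : (Θ x₃).2.2 * x₁.2.2 - x₁.2.2 * (Θ x₃).2.2 = 0 := by
        simp [hx₁]
      rw [h1, h2, add_zero]
    have expand : Θ x * x - x * Θ x
        = (D x₁ x₁ + D x₂ x₂ + D x₃ x₃) + (D x₁ x₂ + D x₂ x₁)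
          + (D x₂ x₃ + D x₃ x₂) + (D x₁ x₃ + D x₃ x₁) := by
      rw [hx]
      simp only [hD, map_add, add_mul, mul_add]; abel
    rw [expand, h11, h22, h33, h12, h23, h13]; simp
end

section
/- Let T = Trian(A, M, B) be a triangular algebra over R which is 2-torsion-free (2x = 0 implies x = 0 in T), in which A and B have only trivial idempotents, and let σ be an automorphism of T given in standard form with data (f, g, m₀, ν). If Θ : T → T is a σ-skew-commuting R-linear map, i.e. σ(x)Θ(x) + Θ(x)x = 0 for all x ∈ T, then Θ = 0. -/
/-!
Triangular algebras `Trian(A, M, B)` realized on the type `A × M × B`, where `A`, `B` are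
unital associative `R`-algebras and `M` is an `(A, B)`-bimodule (a left `A`-module and a
right `B`-module, the right action being encoded as a left `Bᵐᵒᵖ`-action, written
`op b • m`, with the two actions commuting), compatible with the `R`-module structure.
-/

set_option linter.unusedSectionVars false

open MulOpposite

variable {R A B M : Type*} [CommRing R] [Ring A] [Ring B]
  [Algebra R A] [Algebra R B]
  [AddCommGroup M] [Module R M]
  [Module A M] [Module Bᵐᵒᵖ M]
  [SMulCommClass A Bᵐᵒᵖ M]
  [IsScalarTower R A M] [SMulCommClass R A M]
  [IsScalarTower R Bᵐᵒᵖ M] [SMulCommClass R Bᵐᵒᵖ M]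

/-- On a 2-torsion-free triangular algebra whose corner algebras have only
trivial idempotents, zero is the only σ-skew-commuting linear map. -/
theorem sigma_skew_commuting_eq_zero
    [Nontrivial M] [FaithfulSMul A M] [FaithfulSMul Bᵐᵒᵖ M]
    (htf : ∀ x : A × M × B, x + x = 0 → x = 0)
    (hA : ∀ e : A, e * e = e → e = 0 ∨ e = 1)
    (hB : ∀ e : B, e * e = e → e = 0 ∨ e = 1)
    (f : A ≃ₐ[R] A) (g : B ≃ₐ[R] B) (m₀ : M) (ν : M ≃ₗ[R] M)
    (hν₁ : ∀ (a : A) (m : M), ν (a • m) = f a • ν m)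
    (hν₂ : ∀ (m : M) (b : B), ν (op b • m) = op (g b) • ν m)
    (σ : (A × M × B) ≃ₐ[R] (A × M × B))
    (hσ : ∀ (a : A) (m : M) (b : B),
      σ (a, m, b) = (f a, f a • m₀ - op (g b) • m₀ + ν m, g b))
    (Θ : (A × M × B) →ₗ[R] (A × M × B))
    (hΘ : ∀ x : A × M × B, σ x * Θ x + Θ x * x = 0) :
    Θ = 0 := by
  have h1 : Θ 1 = 0 := by
    apply htf
    have := hΘ 1
    simpa using this
  refine LinearMap.ext fun x => ?_
  show Θ x = 0
  apply htf
  have h2 := hΘ (x + 1)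
  have h3 := hΘ x
  simp only [map_add, h1, add_zero, mul_add, add_mul, mul_one, one_mul, map_one] at h2
  -- h2 : σ x * Θ x + Θ x + (Θ x * x + Θ x) = 0
  calc Θ x + Θ x
      = σ x * Θ x + Θ x + (Θ x * x + Θ x) - (σ x * Θ x + Θ x * x) := by abel
    _ = 0 := by rw [h2, h3]; simp
end

section
/- Let T = Trian(A, M, B) be a triangular algebra over R which is 2-torsion-free (2x = 0 implies x = 0 in T), and assume A and B have only trivial idempotents. If Θ : T → T is a skew-commuting R-linear map, i.e. xΘ(x) + Θ(x)x = 0 for all x ∈ T, then Θ = 0. -/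
/-!
Triangular algebras `Trian(A, M, B)` realized on the type `A × M × B`, where `A`, `B` are
unital associative `R`-algebras and `M` is an `(A, B)`-bimodule (a left `A`-module and a
right `B`-module, the right action being encoded as a left `Bᵐᵒᵖ`-action, written
`op b • m`, with the two actions commuting), compatible with the `R`-module structure.
-/

set_option linter.unusedSectionVars false

open MulOpposite

variable {R A B M : Type*} [CommRing R] [Ring A] [Ring B]
  [Algebra R A] [Algebra R B]
  [AddCommGroup M] [Module R M]
  [Module A M] [Module Bᵐᵒᵖ M]
  [SMulCommClass A Bᵐᵒᵖ M]
  [IsScalarTower R A M] [SMulCommClass R A M]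
  [IsScalarTower R Bᵐᵒᵖ M] [SMulCommClass R Bᵐᵒᵖ M]

/-- On a 2-torsion-free triangular algebra whose corner algebras have only
trivial idempotents, zero is the only skew-commuting linear map. -/
theorem skew_commuting_eq_zero
    [Nontrivial M] [FaithfulSMul A M] [FaithfulSMul Bᵐᵒᵖ M]
    (htf : ∀ x : A × M × B, x + x = 0 → x = 0)
    (hA : ∀ e : A, e * e = e → e = 0 ∨ e = 1)
    (hB : ∀ e : B, e * e = e → e = 0 ∨ e = 1)
    (Θ : (A × M × B) →ₗ[R] (A × M × B))
    (hΘ : ∀ x : A × M × B, x * Θ x + Θ x * x = 0) :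
    Θ = 0 := by
  have h1 : Θ 1 = 0 := by
    have h := hΘ 1
    rw [one_mul, mul_one] at h
    exact htf _ h
  refine LinearMap.ext fun x => ?_
  have h := hΘ (x + 1)
  rw [map_add, h1, add_zero, add_mul, mul_add, one_mul, mul_one] at h
  have hx := hΘ x
  have : Θ x + Θ x = 0 := by
    have : (x * Θ x + Θ x * x) + (Θ x + Θ x) = 0 := by rw [← h]; abel
    rwa [hx, zero_add] at this
  simpa using htf _ this
end

section
/- Let T = Trian(A, M, B) be a triangular algebra over R. Then every left multiplier F of T is of the form F(a, m, b) = (F_A(a), m_F·b + F_A(1_A)·m, F_B(b)) for all (a, m, b) ∈ T, where m_F is an element of M, F_A is a left multiplier of A, and F_B is a left multiplier of B. -/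
/-!
Triangular algebras `Trian(A, M, B)` realized on the type `A × M × B`, where `A`, `B` are
unital associative `R`-algebras and `M` is an `(A, B)`-bimodule (a left `A`-module and a
right `B`-module, the right action being encoded as a left `Bᵐᵒᵖ`-action, written
`op b • m`, with the two actions commuting), compatible with the `R`-module structure.
-/

set_option linter.unusedSectionVars false

open MulOpposite

variable {R A B M : Type*} [CommRing R] [Ring A] [Ring B]
  [Algebra R A] [Algebra R B]
  [AddCommGroup M] [Module R M]
  [Module A M] [Module Bᵐᵒᵖ M]
  [SMulCommClass A Bᵐᵒᵖ M]
  [IsScalarTower R A M] [SMulCommClass R A M]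
  [IsScalarTower R Bᵐᵒᵖ M] [SMulCommClass R Bᵐᵒᵖ M]

/-- Description of left multipliers of a triangular algebra. -/
theorem left_multiplier_description
    [Nontrivial M] [FaithfulSMul A M] [FaithfulSMul Bᵐᵒᵖ M]
    (F : (A × M × B) →ₗ[R] (A × M × B))
    (hF : ∀ x y : A × M × B, F (x * y) = F x * y) :
    ∃ (m_F : M) (FA : A →ₗ[R] A) (FB : B →ₗ[R] B),
      -- FA is a left multiplier of A
      (∀ a a' : A, FA (a * a') = FA a * a') ∧
      -- FB is a left multiplier of B
      (∀ b b' : B, FB (b * b') = FB b * b') ∧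
      -- the form of F
      (∀ (a : A) (m : M) (b : B),
        F (a, m, b) = (FA a, op b • m_F + FA 1 • m, FB b)) := by
  set p := F 1 with hp
  refine ⟨p.2.1, LinearMap.mulLeft R p.1, LinearMap.mulLeft R p.2.2,
    fun a a' => (mul_assoc _ _ _).symm, fun b b' => (mul_assoc _ _ _).symm, fun a m b => ?_⟩
  have h : F (a, m, b) = p * (a, m, b) := by
    rw [← one_mul ((a, m, b) : A × M × B), hF, hp, one_mul]
  rw [h, tri_mul_def]
  refine Prod.ext rfl (Prod.ext ?_ rfl)
  simp [LinearMap.mulLeft_apply, add_comm]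
end

section
/- Let T = Trian(A, M, B) be a triangular algebra over R in which A and B have only trivial idempotents, and let σ be an automorphism of T given in standard form with data (f, g, m₀, ν). If d is a σ-derivation of T which is σ-centralizing, i.e. σ(x)d(x) − d(x)x ∈ Z(T) for all x ∈ T, then d = 0. -/
/-!
Triangular algebras `Trian(A, M, B)` realized on the type `A × M × B`, where `A`, `B` are
unital associative `R`-algebras and `M` is an `(A, B)`-bimodule (a left `A`-module and a
right `B`-module, the right action being encoded as a left `Bᵐᵒᵖ`-action, written
`op b • m`, with the two actions commuting), compatible with the `R`-module structure.
-/

set_option linter.unusedSectionVars false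

open MulOpposite

variable {R A B M : Type*} [CommRing R] [Ring A] [Ring B]
  [Algebra R A] [Algebra R B]
  [AddCommGroup M] [Module R M]
  [Module A M] [Module Bᵐᵒᵖ M]
  [SMulCommClass A Bᵐᵒᵖ M]
  [IsScalarTower R A M] [SMulCommClass R A M]
  [IsScalarTower R Bᵐᵒᵖ M] [SMulCommClass R Bᵐᵒᵖ M]

theorem tri_mul_fst' (x y : A × M × B) : (x * y).1 = x.1 * y.1 := rfl

theorem tri_mul_snd' (x y : A × M × B) :
    (x * y).2.1 = x.1 • y.2.1 + op y.2.2 • x.2.1 := rfl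

theorem tri_mul_trd' (x y : A × M × B) : (x * y).2.2 = x.2.2 * y.2.2 := rfl

/-- Posner's theorem for triangular algebras: a σ-centralizing
σ-derivation of a triangular algebra whose corner algebras have only trivial idempotents
is zero. -/
theorem sigma_centralizing_sigma_derivation_eq_zero
    [Nontrivial M] [FaithfulSMul A M] [FaithfulSMul Bᵐᵒᵖ M]
    (hA : ∀ e : A, e * e = e → e = 0 ∨ e = 1)
    (hB : ∀ e : B, e * e = e → e = 0 ∨ e = 1)
    (f : A ≃ₐ[R] A) (g : B ≃ₐ[R] B) (m₀ : M) (ν : M ≃ₗ[R] M)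
    (hν₁ : ∀ (a : A) (m : M), ν (a • m) = f a • ν m)
    (hν₂ : ∀ (m : M) (b : B), ν (op b • m) = op (g b) • ν m)
    (σ : (A × M × B) ≃ₐ[R] (A × M × B))
    (hσ : ∀ (a : A) (m : M) (b : B),
      σ (a, m, b) = (f a, f a • m₀ - op (g b) • m₀ + ν m, g b))
    (d : (A × M × B) →ₗ[R] (A × M × B))
    (hd : ∀ x y : A × M × B, d (x * y) = d x * y + σ x * d y)
    (hc : ∀ x y : A × M × B, (σ x * d x - d x * x) * y = y * (σ x * d x - d x * x)) :
    d = 0 := by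
  -- d(1) = 0
  have h1 : d 1 = 0 := by
    have h := hd 1 1
    rw [one_mul, show σ 1 = 1 from map_one σ, one_mul, mul_one] at h
    exact (left_eq_add.mp h)
  -- values of σ on special elements
  have hσe : σ ((1 : A), (0 : M), (0 : B)) = (1, m₀, 0) := by rw [hσ]; simp
  have hσf : σ ((0 : A), (0 : M), (1 : B)) = (0, -m₀, 1) := by rw [hσ]; simp
  have hσam : ∀ (a : A) (m : M),
      σ (a, m, (0 : B)) = (f a, f a • m₀ + ν m, 0) := by
    intro a m; rw [hσ]; simp
  have hσmb : ∀ (m : M) (b : B),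
      σ ((0 : A), m, b) = (0, -(op (g b) • m₀) + ν m, g b) := by
    intro m b; rw [hσ]; simp
  -- d(e) = 0 where e = (1,0,0)
  have hde : d ((1 : A), (0 : M), (0 : B)) = 0 := by
    have hee : ((1 : A), (0 : M), (0 : B)) * ((1 : A), (0 : M), (0 : B))
        = ((1 : A), (0 : M), (0 : B)) := by
      rw [tri_mul_def]; simp
    have h := hd ((1 : A), (0 : M), (0 : B)) ((1 : A), (0 : M), (0 : B))
    rw [hee, hσe] at h
    have c1 : (d ((1 : A), (0 : M), (0 : B))).1 = 0 := by
      have := congrArg Prod.fst h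
      simpa [tri_mul_fst'] using this
    have c3 : (d ((1 : A), (0 : M), (0 : B))).2.2 = 0 := by
      have := congrArg (fun z : A × M × B => z.2.2) h
      simpa [tri_mul_trd'] using this
    have hform : d ((1 : A), (0 : M), (0 : B))
        = ((0 : A), (d ((1 : A), (0 : M), (0 : B))).2.1, (0 : B)) := by
      refine Prod.ext c1 (Prod.ext rfl c3)
    have h2 := hc ((1 : A), (0 : M), (0 : B)) ((1 : A), (0 : M), (0 : B))
    rw [hσe, hform] at h2
    have c2 : (d ((1 : A), (0 : M), (0 : B))).2.1 = 0 := by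
      have := congrArg (fun z : A × M × B => z.2.1) h2
      simpa [tri_mul_def, Prod.mk_sub_mk] using this.symm
    exact Prod.ext c1 (Prod.ext c2 c3)
  -- d(f) = 0 where f = (0,0,1)
  have hdf : d ((0 : A), (0 : M), (1 : B)) = 0 := by
    have h : ((0 : A), (0 : M), (1 : B)) = (1 : A × M × B) - ((1 : A), (0 : M), (0 : B)) := by
      rw [tri_one_def]
      refine Prod.ext ?_ (Prod.ext ?_ ?_) <;> simp
    rw [h, map_sub, h1, hde, sub_zero]
  -- shape of d(0,m,0)
  have shape_m3 : ∀ m : M, (d ((0 : A), m, (0 : B))).2.2 = 0 := by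
    intro m
    have hprod : ((1 : A), (0 : M), (0 : B)) * ((0 : A), m, (0 : B))
        = ((0 : A), m, (0 : B)) := by rw [tri_mul_def]; simp
    have h := hd ((1 : A), (0 : M), (0 : B)) ((0 : A), m, (0 : B))
    rw [hprod, hde, hσe, zero_mul, zero_add] at h
    have := congrArg (fun z : A × M × B => z.2.2) h
    simpa [tri_mul_trd'] using this
  have shape_m1 : ∀ m : M, (d ((0 : A), m, (0 : B))).1 = 0 := by
    intro m
    have hprod : ((0 : A), m, (0 : B)) * ((0 : A), (0 : M), (1 : B))
        = ((0 : A), m, (0 : B)) := by rw [tri_mul_def]; simp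
    have h := hd ((0 : A), m, (0 : B)) ((0 : A), (0 : M), (1 : B))
    rw [hprod, hdf, mul_zero, add_zero] at h
    have := congrArg Prod.fst h
    simpa [tri_mul_fst'] using this
  -- shape of d(a,0,0)
  have shape_a2 : ∀ a : A, (d ((a : A), (0 : M), (0 : B))).2.1 = 0 := by
    intro a
    have hprod : ((a : A), (0 : M), (0 : B)) * ((1 : A), (0 : M), (0 : B))
        = ((a : A), (0 : M), (0 : B)) := by rw [tri_mul_def]; simp
    have h := hd ((a : A), (0 : M), (0 : B)) ((1 : A), (0 : M), (0 : B))
    rw [hprod, hde, mul_zero, add_zero] at h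
    have := congrArg (fun z : A × M × B => z.2.1) h
    simpa [tri_mul_snd'] using this
  have shape_a3 : ∀ a : A, (d ((a : A), (0 : M), (0 : B))).2.2 = 0 := by
    intro a
    have hprod : ((a : A), (0 : M), (0 : B)) * ((1 : A), (0 : M), (0 : B))
        = ((a : A), (0 : M), (0 : B)) := by rw [tri_mul_def]; simp
    have h := hd ((a : A), (0 : M), (0 : B)) ((1 : A), (0 : M), (0 : B))
    rw [hprod, hde, mul_zero, add_zero] at h
    have := congrArg (fun z : A × M × B => z.2.2) h
    simpa [tri_mul_trd'] using this
  -- shape of d(0,0,b)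
  have shape_b1 : ∀ b : B, (d ((0 : A), (0 : M), b)).1 = 0 := by
    intro b
    have hprod : ((0 : A), (0 : M), b) * ((0 : A), (0 : M), (1 : B))
        = ((0 : A), (0 : M), b) := by rw [tri_mul_def]; simp
    have h := hd ((0 : A), (0 : M), b) ((0 : A), (0 : M), (1 : B))
    rw [hprod, hdf, mul_zero, add_zero] at h
    have := congrArg Prod.fst h
    simpa [tri_mul_fst'] using this
  have shape_b2 : ∀ b : B,
      (d ((0 : A), (0 : M), b)).2.1 = -(op ((d ((0 : A), (0 : M), b)).2.2) • m₀) := by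
    intro b
    have hprod : ((0 : A), (0 : M), (1 : B)) * ((0 : A), (0 : M), b)
        = ((0 : A), (0 : M), b) := by rw [tri_mul_def]; simp
    have h := hd ((0 : A), (0 : M), (1 : B)) ((0 : A), (0 : M), b)
    rw [hprod, hdf, zero_mul, zero_add, hσf] at h
    have := congrArg (fun z : A × M × B => z.2.1) h
    simpa [tri_mul_snd'] using this
  -- key identity from centralizing at (a, m, 0)
  have key1 : ∀ (a : A) (m : M),
      f a • (d ((0 : A), m, (0 : B))).2.1 = (d ((a : A), (0 : M), (0 : B))).1 • m := by
    intro a m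
    have hsum : ((a : A), m, (0 : B)) = ((a : A), (0 : M), (0 : B)) + ((0 : A), m, (0 : B)) := by
      refine Prod.ext ?_ (Prod.ext ?_ ?_) <;> simp
    have hx : d ((a : A), m, (0 : B))
        = ((d ((a : A), (0 : M), (0 : B))).1, (d ((0 : A), m, (0 : B))).2.1, (0 : B)) := by
      rw [hsum, map_add]
      refine Prod.ext ?_ (Prod.ext ?_ ?_) <;>
        simp [-Prod.mk_zero_zero, shape_a2 a, shape_a3 a, shape_m1 m, shape_m3 m]
    have h := hc ((a : A), m, (0 : B)) ((0 : A), (0 : M), (1 : B))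
    rw [hσam, hx] at h
    have := congrArg (fun z : A × M × B => z.2.1) h
    simp [tri_mul_def, Prod.mk_sub_mk, sub_eq_zero] at this
    exact this
  -- d vanishes on M and on A
  have dM : ∀ m : M, d ((0 : A), m, (0 : B)) = 0 := by
    intro m
    have h := key1 1 m
    rw [hde, map_one, one_smul] at h
    have h2 : (d ((0 : A), m, (0 : B))).2.1 = 0 := by simpa using h
    exact Prod.ext (shape_m1 m) (Prod.ext h2 (shape_m3 m))
  have dA : ∀ a : A, d ((a : A), (0 : M), (0 : B)) = 0 := by
    intro a
    have hfst : (d ((a : A), (0 : M), (0 : B))).1 = 0 := by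
      refine eq_of_smul_eq_smul (α := M) fun m => ?_
      have h := key1 a m
      rw [dM m] at h
      simpa using h.symm
    exact Prod.ext hfst (Prod.ext (shape_a2 a) (shape_a3 a))
  -- d vanishes on B
  have dB : ∀ b : B, d ((0 : A), (0 : M), b) = 0 := by
    intro b
    have hx : ∀ m : M, d ((0 : A), m, b)
        = ((0 : A), -(op ((d ((0 : A), (0 : M), b)).2.2) • m₀),
            (d ((0 : A), (0 : M), b)).2.2) := by
      intro m
      have hsum : ((0 : A), m, b) = ((0 : A), m, (0 : B)) + ((0 : A), (0 : M), b) := by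
        refine Prod.ext ?_ (Prod.ext ?_ ?_) <;> simp
      rw [hsum, map_add, dM m, zero_add]
      exact Prod.ext (shape_b1 b) (Prod.ext (shape_b2 b) rfl)
    have hE : ∀ m : M,
        op ((d ((0 : A), (0 : M), b)).2.2) • (-(op (g b) • m₀) + ν m)
          - op b • (-(op ((d ((0 : A), (0 : M), b)).2.2) • m₀)) = 0 := by
      intro m
      have h := hc ((0 : A), m, b) ((1 : A), (0 : M), (0 : B))
      rw [hσmb, hx m] at h
      have := congrArg (fun z : A × M × B => z.2.1) h
      simp [tri_mul_def, Prod.mk_sub_mk] at this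
      simpa [smul_add, smul_neg, sub_eq_zero] using this.symm
    have hνm : ∀ m : M, op ((d ((0 : A), (0 : M), b)).2.2) • ν m = 0 := by
      intro m
      have hm := hE m
      have h0 := hE 0
      rw [map_zero, add_zero] at h0
      have key : op ((d ((0 : A), (0 : M), b)).2.2) • (-(op (g b) • m₀) + ν m)
          - op ((d ((0 : A), (0 : M), b)).2.2) • (-(op (g b) • m₀)) = 0 := by
        rw [sub_eq_zero]
        calc op ((d ((0 : A), (0 : M), b)).2.2) • (-(op (g b) • m₀) + ν m)
            = op b • (-(op ((d ((0 : A), (0 : M), b)).2.2) • m₀)) := sub_eq_zero.mp hm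
          _ = op ((d ((0 : A), (0 : M), b)).2.2) • (-(op (g b) • m₀)) :=
              (sub_eq_zero.mp h0).symm
      simpa [smul_add] using key
    have hq : op ((d ((0 : A), (0 : M), b)).2.2) = (0 : Bᵐᵒᵖ) := by
      refine eq_of_smul_eq_smul (α := M) fun m' => ?_
      obtain ⟨m, rfl⟩ := ν.surjective m'
      simp [hνm m]
    have hq' : (d ((0 : A), (0 : M), b)).2.2 = 0 := by
      simpa using congrArg unop hq
    refine Prod.ext (shape_b1 b) (Prod.ext ?_ hq')
    rw [shape_b2 b, hq']
    simp
  -- conclusion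
  refine LinearMap.ext fun x => ?_
  obtain ⟨a, m, b⟩ := x
  have hsplit : ((a, m, b) : A × M × B)
      = ((a : A), (0 : M), (0 : B)) + ((0 : A), m, (0 : B)) + ((0 : A), (0 : M), b) := by
    refine Prod.ext ?_ (Prod.ext ?_ ?_) <;> simp
  rw [hsplit, map_add, map_add, dA a, dM m, dB b]
  simp
end

section
/- Let T = Trian(A, M, B) be a triangular algebra over R. If d is a derivation of T which is centralizing, i.e. d(x)x − xd(x) ∈ Z(T) for all x ∈ T, then d = 0. -/
/-!
Triangular algebras `Trian(A, M, B)` realized on the type `A × M × B`, where `A`, `B` are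
unital associative `R`-algebras and `M` is an `(A, B)`-bimodule (a left `A`-module and a
right `B`-module, the right action being encoded as a left `Bᵐᵒᵖ`-action, written
`op b • m`, with the two actions commuting), compatible with the `R`-module structure.
-/

set_option linter.unusedSectionVars false

open MulOpposite

variable {R A B M : Type*} [CommRing R] [Ring A] [Ring B]
  [Algebra R A] [Algebra R B]
  [AddCommGroup M] [Module R M]
  [Module A M] [Module Bᵐᵒᵖ M]
  [SMulCommClass A Bᵐᵒᵖ M]
  [IsScalarTower R A M] [SMulCommClass R A M]
  [IsScalarTower R Bᵐᵒᵖ M] [SMulCommClass R Bᵐᵒᵖ M]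

/-!
Write `e = (1, 0, 0)` and `f = (0, 0, 1) = 1 - e`. Leibniz's rule on `e = e²` kills the diagonal
entries of `d e`, and the centrality of `d e * e - e * d e` against `e` kills its corner entry, so
`d e = d f = 0` and hence `d (e * x * f) = e * d x * f`. This puts `d (0, m, 0)` in the corner,
and then `d (1, m, 0) * (1, m, 0) - (1, m, 0) * d (1, m, 0) = -d (0, m, 0)` must commute with `e`,
which forces `d (0, m, 0) = 0`. Leibniz's rule on `x * (0, m, 0)` and `(0, m, 0) * x` together with
faithfulness of `M` then kills the diagonal entries of `d x`, and its corner entry is that of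
`e * d x * f = d (e * x * f) = d (0, x.2.1, 0) = 0`.
-/

section Leibniz

variable {S : Type*} [Ring S] {d : S → S}

theorem map_one_eq_zero_of_leibniz (hd : ∀ x y, d (x * y) = d x * y + x * d y) : d 1 = 0 := by
  simpa using hd 1 1

theorem map_mul_mul_of_leibniz (hd : ∀ x y, d (x * y) = d x * y + x * d y) {e f : S}
    (he : d e = 0) (hf : d f = 0) (x : S) : d (e * x * f) = e * d x * f := by
  rw [hd, hf, mul_zero, add_zero, hd, he, zero_mul, zero_add]

end Leibniz

theorem tri_one_zero_zero_mul_mul_zero_zero_one (x : A × M × B) :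
    (1, 0, 0) * x * (0, 0, 1) = (0, x.2.1, 0) := by
  simp [tri_mul_def]

theorem tri_map_one_zero_zero_eq_zero {d : A × M × B → A × M × B}
    (hd : ∀ x y, d (x * y) = d x * y + x * d y)
    (hc : ∀ x y, (d x * x - x * d x) * y = y * (d x * x - x * d x)) :
    d (1, 0, 0) = 0 := by
  have hidem := hd (1, 0, 0) (1, 0, 0)
  have hcomm := hc (1, 0, 0) (1, 0, 0)
  refine Prod.ext ?_ (Prod.ext ?_ ?_)
  · simpa [tri_mul_def] using congrArg Prod.fst hidem
  · simpa [tri_mul_def] using hcomm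
  · simpa [tri_mul_def] using congrArg (·.2.2) hidem

theorem tri_map_zero_mk_zero_eq_zero {F : Type*} [FunLike F (A × M × B) (A × M × B)]
    [AddHomClass F (A × M × B) (A × M × B)] {d : F}
    (hd : ∀ x y, d (x * y) = d x * y + x * d y)
    (hc : ∀ x y, (d x * x - x * d x) * y = y * (d x * x - x * d x))
    (he : d (1, 0, 0) = 0) (hf : d (0, 0, 1) = 0) (m : M) : d (0, m, 0) = 0 := by
  have hcorner : d (0, m, 0) = (0, (d (0, m, 0)).2.1, 0) := by
    rw [← tri_one_zero_zero_mul_mul_zero_zero_one, ← map_mul_mul_of_leibniz hd he hf,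
      tri_one_zero_zero_mul_mul_zero_zero_one]
  have h := hc (1, m, 0) (1, 0, 0)
  rw [show ((1, m, 0) : A × M × B) = (1, 0, 0) + (0, m, 0) by simp, map_add, he, zero_add,
    hcorner] at h
  have hq : (d (0, m, 0)).2.1 = 0 := by simpa [tri_mul_def] using h
  rw [hcorner, hq]
  rfl

theorem tri_map_fst_eq_zero [FaithfulSMul A M] {d : A × M × B → A × M × B}
    (hd : ∀ x y, d (x * y) = d x * y + x * d y)
    (hM : ∀ m : M, d (0, m, 0) = 0) (x : A × M × B) : (d x).1 = 0 := by
  refine eq_of_smul_eq_smul (α := M) fun m => ?_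
  have h := congrArg (·.2.1) (hd x (0, m, 0))
  simpa [tri_mul_def, hM] using h.symm

theorem tri_map_snd_snd_eq_zero [FaithfulSMul Bᵐᵒᵖ M] {d : A × M × B → A × M × B}
    (hd : ∀ x y, d (x * y) = d x * y + x * d y)
    (hM : ∀ m : M, d (0, m, 0) = 0) (x : A × M × B) : (d x).2.2 = 0 := by
  refine op_injective (eq_of_smul_eq_smul (α := M) fun m => ?_)
  have h := congrArg (·.2.1) (hd (0, m, 0) x)
  simpa [tri_mul_def, hM] using h.symm

theorem centralizing_derivation_eq_zero_general
    [FaithfulSMul A M] [FaithfulSMul Bᵐᵒᵖ M]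
    (d : (A × M × B) →ₗ[R] (A × M × B))
    (hd : ∀ x y : A × M × B, d (x * y) = d x * y + x * d y)
    (hc : ∀ x y : A × M × B, (d x * x - x * d x) * y = y * (d x * x - x * d x)) :
    d = 0 := by
  have he : d (1, 0, 0) = 0 := tri_map_one_zero_zero_eq_zero hd hc
  have hf : d (0, 0, 1) = 0 := by
    rw [show ((0, 0, 1) : A × M × B) = 1 - (1, 0, 0) by simp [tri_one_def], map_sub,
      map_one_eq_zero_of_leibniz hd, he, sub_zero]
  have hM := tri_map_zero_mk_zero_eq_zero hd hc he hf
  refine LinearMap.ext fun x => Prod.ext (tri_map_fst_eq_zero hd hM x)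
    (Prod.ext ?_ (tri_map_snd_snd_eq_zero hd hM x))
  calc (d x).2.1 = ((1, 0, 0) * d x * (0, 0, 1)).2.1 := by
        rw [tri_one_zero_zero_mul_mul_zero_zero_one]
    _ = (d (0, x.2.1, 0)).2.1 := by
        rw [← map_mul_mul_of_leibniz hd he hf, tri_one_zero_zero_mul_mul_zero_zero_one]
    _ = 0 := by rw [hM]; rfl

/-- A centralizing derivation of a triangular algebra is zero. -/
theorem centralizing_derivation_eq_zero
    [Nontrivial M] [FaithfulSMul A M] [FaithfulSMul Bᵐᵒᵖ M]
    (d : (A × M × B) →ₗ[R] (A × M × B))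
    (hd : ∀ x y : A × M × B, d (x * y) = d x * y + x * d y)
    (hc : ∀ x y : A × M × B, (d x * x - x * d x) * y = y * (d x * x - x * d x)) :
    d = 0 :=
  centralizing_derivation_eq_zero_general d hd hc
end

section
/- Let T = Trian(A, M, B) be a triangular algebra over R such that A and B have only trivial idempotents. If σ is an algebra automorphism of T which is centralizing, i.e. σ(x)x − xσ(x) ∈ Z(T) for all x ∈ T, then σ is the identity map on T. -/
/-!
Triangular algebras `Trian(A, M, B)` realized on the type `A × M × B`, where `A`, `B` are
unital associative `R`-algebras and `M` is an `(A, B)`-bimodule (a left `A`-module and a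
right `B`-module, the right action being encoded as a left `Bᵐᵒᵖ`-action, written
`op b • m`, with the two actions commuting), compatible with the `R`-module structure.
-/

set_option linter.unusedSectionVars false

open MulOpposite

variable {R A B M : Type*} [CommRing R] [Ring A] [Ring B]
  [Algebra R A] [Algebra R B]
  [AddCommGroup M] [Module R M]
  [Module A M] [Module Bᵐᵒᵖ M]
  [SMulCommClass A Bᵐᵒᵖ M]
  [IsScalarTower R A M] [SMulCommClass R A M]
  [IsScalarTower R Bᵐᵒᵖ M] [SMulCommClass R Bᵐᵒᵖ M]

/-!
Let `P = (1, 0, 0)` and `Q = 1 - P = (0, 0, 1)`. An element commuting with `P` has zero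
`M`-component, and `σ P * P - P * σ P = (0, -(σ P).2.1, 0)`; so `σ P` is a diagonal idempotent,
hence one of `0, P, Q, 1`. Injectivity excludes `0` and `1`, and `Q` is excluded because
`M = P T Q` is nonzero while `Q T P = 0`. Once `σ P = P`, the centralizing condition at `x` and at
`x + P` shows that `[σ x - x, P]` commutes with `P`, i.e. `σ` preserves `M`-components. Then `σ`
fixes `M = P T Q` pointwise, and comparing `M`-components of `σ (x * m) = σ x * m` and
`σ (m * x) = m * σ x` gives `σ x = x` by faithfulness of `M` on both sides.
-/

def triP : A × M × B := (1, 0, 0)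

def triQ : A × M × B := (0, 0, 1)

theorem triP_add_triQ : (triP : A × M × B) + triQ = 1 := by
  simp [triP, triQ, tri_one_def]

theorem isIdempotentElem_triP : IsIdempotentElem (triP : A × M × B) := by
  simp [IsIdempotentElem, triP, tri_mul_def]

theorem triP_mul_mul_triQ (x : A × M × B) : triP * x * triQ = (0, x.2.1, 0) := by
  simp [triP, triQ, tri_mul_def]

theorem triQ_mul_mul_triP (x : A × M × B) : triQ * x * triP = 0 := by
  simp [triP, triQ, tri_mul_def]

theorem mul_triP_sub_triP_mul (x : A × M × B) : x * triP - triP * x = (0, -x.2.1, 0) := by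
  simp [triP, tri_mul_def]

theorem snd_fst_eq_zero_of_commute_triP {z : A × M × B} (h : Commute z triP) : z.2.1 = 0 := by
  have h0 := mul_triP_sub_triP_mul z
  rw [h.eq, sub_self] at h0
  simpa using congrArg (fun x : A × M × B => x.2.1) h0

theorem triP_ne_zero [Nontrivial M] : (triP : A × M × B) ≠ 0 := by
  have := Module.nontrivial A M
  simp [triP]

theorem triP_ne_one [Nontrivial M] : (triP : A × M × B) ≠ 1 := by
  have := Module.nontrivial Bᵐᵒᵖ M
  have := op_surjective (α := B).nontrivial
  simp [triP, tri_one_def]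

theorem eq_zero_or_triP_or_triQ_or_one_of_isIdempotentElem
    (hA : ∀ e : A, IsIdempotentElem e → e = 0 ∨ e = 1)
    (hB : ∀ e : B, IsIdempotentElem e → e = 0 ∨ e = 1)
    {x : A × M × B} (hx : IsIdempotentElem x) (hmid : x.2.1 = 0) :
    x = 0 ∨ x = triP ∨ x = triQ ∨ x = 1 := by
  obtain ⟨a, m, b⟩ := x
  obtain rfl : m = 0 := hmid
  have ha : IsIdempotentElem a := congrArg (fun x : A × M × B => x.1) hx
  have hb : IsIdempotentElem b := congrArg (fun x : A × M × B => x.2.2) hx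
  rcases hA a ha with rfl | rfl <;> rcases hB b hb with rfl | rfl <;>
    simp [triP, triQ, tri_one_def]

section RingHom

variable {F : Type*} [FunLike F (A × M × B) (A × M × B)]
  [RingHomClass F (A × M × B) (A × M × B)]

theorem map_triQ_of_map_triP {σ : F} {y : A × M × B} (h : σ triP = y) : σ triQ = 1 - y := by
  rw [← h, ← map_one σ, ← map_sub, ← triP_add_triQ, add_sub_cancel_left]

theorem map_triP_ne_triQ [Nontrivial M] (σ : F) (hσ : Function.Injective σ) :
    σ triP ≠ triQ := by
  intro hP
  have hQ : σ triQ = triP := by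
    rw [map_triQ_of_map_triP hP, ← triP_add_triQ, add_sub_cancel_right]
  obtain ⟨m, hm⟩ := exists_ne (0 : M)
  let u : A × M × B := (0, m, 0)
  have hu : triP * u * triQ = u := triP_mul_mul_triQ u
  have : σ u = σ 0 := by
    rw [← hu, map_mul, map_mul, hP, hQ, triQ_mul_mul_triP, map_zero]
  exact hm (congrArg (fun x : A × M × B => x.2.1) (hσ this))

theorem map_triP_eq_triP [Nontrivial M]
    (hA : ∀ e : A, IsIdempotentElem e → e = 0 ∨ e = 1)
    (hB : ∀ e : B, IsIdempotentElem e → e = 0 ∨ e = 1)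
    (σ : F) (hσ : Function.Injective σ)
    (hc : Commute (σ triP * triP - triP * σ triP) triP) : σ triP = triP := by
  have hmid : (σ triP).2.1 = 0 := by
    simpa [mul_triP_sub_triP_mul] using snd_fst_eq_zero_of_commute_triP hc
  rcases eq_zero_or_triP_or_triQ_or_one_of_isIdempotentElem hA hB
    (isIdempotentElem_triP.map σ) hmid with h | h | h | h
  · exact absurd ((map_eq_zero_iff σ hσ).1 h) triP_ne_zero
  · exact h
  · exact absurd h (map_triP_ne_triQ σ hσ)
  · exact absurd ((map_eq_one_iff σ hσ).1 h) triP_ne_one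

theorem snd_fst_map_eq_of_map_triP (σ : F) (hP : σ triP = triP)
    (hc : ∀ x, Commute (σ x * x - x * σ x) triP) (x : A × M × B) : (σ x).2.1 = x.2.1 := by
  have hlin : σ (x + triP) * (x + triP) - (x + triP) * σ (x + triP) - (σ x * x - x * σ x)
      = (σ x - x) * triP - triP * (σ x - x) := by
    rw [map_add, hP]
    noncomm_ring
  have h := snd_fst_eq_zero_of_commute_triP ((hc (x + triP)).sub_left (hc x))
  rw [hlin, mul_triP_sub_triP_mul] at h
  rw [eq_comm]
  simpa [sub_eq_zero] using h

theorem map_eq_self_of_map_triP_of_snd_fst [FaithfulSMul A M] [FaithfulSMul Bᵐᵒᵖ M]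
    (σ : F) (hP : σ triP = triP) (hmid : ∀ x, (σ x).2.1 = x.2.1) (x : A × M × B) :
    σ x = x := by
  have hQ : σ triQ = triQ := by
    rw [map_triQ_of_map_triP hP, ← triP_add_triQ, add_sub_cancel_left]
  have hM (m : M) : σ (0, m, 0) = (0, m, 0) := by
    calc σ (0, m, 0) = σ (triP * (0, m, 0) * triQ) := by rw [triP_mul_mul_triQ]
      _ = triP * σ (0, m, 0) * triQ := by rw [map_mul, map_mul, hP, hQ]
      _ = (0, m, 0) := by rw [triP_mul_mul_triQ, hmid]
  have hleft (m : M) : (σ x).1 • m = x.1 • m := by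
    have h := hmid (x * (0, m, 0))
    rw [map_mul, hM] at h
    simpa [tri_mul_def] using h
  have hright (m : M) : op (σ x).2.2 • m = op x.2.2 • m := by
    have h := hmid ((0, m, 0) * x)
    rw [map_mul, hM] at h
    simpa [tri_mul_def] using h
  exact Prod.ext (eq_of_smul_eq_smul hleft)
    (Prod.ext (hmid x) (op_injective (eq_of_smul_eq_smul hright)))

end RingHom

/-- Mayne's theorem for triangular algebras: a centralizing algebra
automorphism of a triangular algebra whose corner algebras have only trivial idempotents
is the identity. -/
theorem centralizing_automorphism_eq_id
    [Nontrivial M] [FaithfulSMul A M] [FaithfulSMul Bᵐᵒᵖ M]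
    (hA : ∀ e : A, e * e = e → e = 0 ∨ e = 1)
    (hB : ∀ e : B, e * e = e → e = 0 ∨ e = 1)
    (σ : (A × M × B) ≃ₐ[R] (A × M × B))
    (hc : ∀ x y : A × M × B, (σ x * x - x * σ x) * y = y * (σ x * x - x * σ x)) :
    ∀ x : A × M × B, σ x = x := by
  have hcP (x : A × M × B) : Commute (σ x * x - x * σ x) triP := hc x triP
  have hP : σ triP = triP := map_triP_eq_triP hA hB σ σ.injective (hcP triP)
  exact map_eq_self_of_map_triP_of_snd_fst σ hP (snd_fst_map_eq_of_map_triP σ hP hcP)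
end

section
/- Let T = Trian(A, M, B) be a triangular algebra over R. Then every generalized derivation D of T which is centralizing, i.e. D(x)x − xD(x) ∈ Z(T) for all x ∈ T, is a left multiplier of T, i.e. D(xy) = D(x)y for all x, y ∈ T. -/
/-!
Triangular algebras `Trian(A, M, B)` realized on the type `A × M × B`, where `A`, `B` are
unital associative `R`-algebras and `M` is an `(A, B)`-bimodule (a left `A`-module and a
right `B`-module, the right action being encoded as a left `Bᵐᵒᵖ`-action, written
`op b • m`, with the two actions commuting), compatible with the `R`-module structure.
-/

set_option linter.unusedSectionVars false

open MulOpposite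

variable {R A B M : Type*} [CommRing R] [Ring A] [Ring B]
  [Algebra R A] [Algebra R B]
  [AddCommGroup M] [Module R M]
  [Module A M] [Module Bᵐᵒᵖ M]
  [SMulCommClass A Bᵐᵒᵖ M]
  [IsScalarTower R A M] [SMulCommClass R A M]
  [IsScalarTower R Bᵐᵒᵖ M] [SMulCommClass R Bᵐᵒᵖ M]

/-- A centralizing generalized derivation of a triangular algebra
degenerates to a left multiplier. -/
theorem centralizing_generalized_derivation_is_left_multiplier
    [Nontrivial M] [FaithfulSMul A M] [FaithfulSMul Bᵐᵒᵖ M]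
    (D d : (A × M × B) →ₗ[R] (A × M × B))
    (hd : ∀ x y : A × M × B, d (x * y) = d x * y + x * d y)
    (hD : ∀ x y : A × M × B, D (x * y) = D x * y + x * d y)
    (hc : ∀ x y : A × M × B, (D x * x - x * D x) * y = y * (D x * x - x * D x)) :
    ∀ x y : A × M × B, D (x * y) = D x * y := by
  have key : ∀ x : A × M × B, d x = 0 := by
    have hd1 : d (1 : A × M × B) = 0 := by
      have h := hd 1 1
      rw [mul_one, mul_one, one_mul] at h
      exact (left_eq_add.mp h)
    have hDx : ∀ x : A × M × B, D x = D 1 * x + d x := fun x => by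
      have h := hD 1 x
      rwa [one_mul, one_mul] at h
    -- e = (1,0,0), f = (0,0,1)
    have hee : ((1,0,0) : A × M × B) * (1,0,0) = (1,0,0) := by
      simp [tri_mul_def]
    -- d e = (0, q, 0)
    obtain ⟨q, hdeq⟩ : ∃ q : M, d ((1,0,0) : A × M × B) = (0, q, 0) := by
      rcases h1 : d ((1,0,0) : A × M × B) with ⟨p, q, r⟩
      refine ⟨q, ?_⟩
      have h := hd (1,0,0) (1,0,0)
      rw [hee, h1] at h
      simp [tri_mul_def, Prod.ext_iff] at h
      simp [h.1, h.2]
    -- q = 0 via the centralizing condition at e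
    have hde : d ((1,0,0) : A × M × B) = 0 := by
      rcases hD1 : D 1 with ⟨c1, c2, c3⟩
      have hDe : D ((1,0,0) : A × M × B) = (c1, q, 0) := by
        rw [hDx (1,0,0), hD1, hdeq]
        simp [tri_mul_def, Prod.ext_iff]
      have h := hc ((1,0,0) : A × M × B) ((1,0,0) : A × M × B)
      rw [hDe] at h
      simp [tri_mul_def, Prod.ext_iff, sub_eq_zero, neg_eq_zero] at h
      rw [hdeq]
      simp [h, Prod.ext_iff]
    have hdf : d (((0,0,1)) : A × M × B) = 0 := by
      have hf : (((0,0,1)) : A × M × B) = 1 - (1,0,0) := by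
        simp [tri_one_def, Prod.ext_iff]
      rw [hf, map_sub, hd1, hde, sub_zero]
    -- d (0,m,0) = (0, t, 0)
    have hdm : ∀ m : M, ∃ t : M, d ((0,m,0) : A × M × B) = (0, t, 0) := by
      intro m
      rcases h1 : d ((0,m,0) : A × M × B) with ⟨p, t, r⟩
      refine ⟨t, ?_⟩
      have h2 := hd ((1,0,0) : A × M × B) (0,m,0)
      have h3 := hd ((0,m,0) : A × M × B) (0,0,1)
      have e1 : ((1,0,0) : A × M × B) * (0,m,0) = (0,m,0) := by simp [tri_mul_def]
      have e2 : ((0,m,0) : A × M × B) * (0,0,1) = (0,m,0) := by simp [tri_mul_def]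
      rw [e1, hde, zero_mul, zero_add, h1] at h2
      rw [e2, hdf, mul_zero, add_zero, h1] at h3
      simp [tri_mul_def, Prod.ext_iff] at h2 h3
      simp [Prod.ext_iff, h2, h3]
    -- d (0,m,0) = 0 via centralizing
    have hdm0 : ∀ m : M, d ((0,m,0) : A × M × B) = 0 := by
      intro m
      obtain ⟨t, ht⟩ := hdm m
      rcases hD1 : D 1 with ⟨c1, c2, c3⟩
      have hDe : D ((1,0,0) : A × M × B) = (c1, 0, 0) := by
        rw [hDx (1,0,0), hD1, hde]
        simp [tri_mul_def, Prod.ext_iff]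
      have hDm : D ((0,m,0) : A × M × B) = (0, c1 • m + t, 0) := by
        rw [hDx (0,m,0), hD1, ht]
        simp [tri_mul_def, Prod.ext_iff]
      -- abbreviations
      set u : A × M × B := (1,0,0) with hu
      set v : A × M × B := (0,m,0) with hv
      have h1 := hc (u + v) u
      have h2 := hc u u
      have h3 := hc v u
      rw [map_add] at h1
      set Q1 : A × M × B := (D u + D v) * (u + v) - (u + v) * (D u + D v) with hQ1
      set Q2 : A × M × B := D u * u - u * D u with hQ2
      set Q3 : A × M × B := D v * v - v * D v with hQ3
      have hw : (Q1 - Q2 - Q3) * u = u * (Q1 - Q2 - Q3) := by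
        rw [sub_mul, sub_mul, mul_sub, mul_sub, h1, h2, h3]
      have hwe : Q1 - Q2 - Q3 = D u * v - v * D u + (D v * u - u * D v) := by
        rw [hQ1, hQ2, hQ3]; noncomm_ring
      rw [hwe] at hw
      rw [hDe, hDm, hu, hv] at hw
      simp [tri_mul_def, Prod.ext_iff, sub_eq_zero] at hw
      rw [ht]
      simp [Prod.ext_iff, hw]
    -- d (a,0,0) = 0
    have hda : ∀ a : A, d ((a,0,0) : A × M × B) = 0 := by
      intro a
      rcases h1 : d ((a,0,0) : A × M × B) with ⟨p, s, r⟩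
      have h2 := hd ((a,0,0) : A × M × B) (1,0,0)
      have e1 : ((a,0,0) : A × M × B) * (1,0,0) = (a,0,0) := by simp [tri_mul_def]
      rw [e1, hde, mul_zero, add_zero, h1] at h2
      simp [tri_mul_def, Prod.ext_iff] at h2
      have hp : p = 0 := by
        refine eq_of_smul_eq_smul (M := A) (α := M) (fun m => ?_)
        have h3 := hd ((a,0,0) : A × M × B) (0,m,0)
        have e2 : ((a,0,0) : A × M × B) * (0,m,0) = (0, a • m, 0) := by simp [tri_mul_def]
        rw [e2, hdm0, hdm0, mul_zero, add_zero, h1] at h3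
        simp [tri_mul_def, Prod.ext_iff] at h3
        simp [h3]
      simp [h1, Prod.ext_iff, hp, h2.1, h2.2]
    -- d (0,0,b) = 0
    have hdb : ∀ b : B, d ((0,0,b) : A × M × B) = 0 := by
      intro b
      rcases h1 : d ((0,0,b) : A × M × B) with ⟨p, s, r⟩
      have h2 := hd ((0,0,1) : A × M × B) (0,0,b)
      have e1 : ((0,0,1) : A × M × B) * (0,0,b) = (0,0,b) := by simp [tri_mul_def]
      rw [e1, hdf, zero_mul, zero_add, h1] at h2
      simp [tri_mul_def, Prod.ext_iff] at h2
      have hr : r = 0 := by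
        have hop : op r = (0 : Bᵐᵒᵖ) := by
          refine eq_of_smul_eq_smul (M := Bᵐᵒᵖ) (α := M) (fun m => ?_)
          have h3 := hd ((0,m,0) : A × M × B) (0,0,b)
          have e2 : ((0,m,0) : A × M × B) * (0,0,b) = (0, op b • m, 0) := by
            simp [tri_mul_def]
          rw [e2, hdm0, hdm0, zero_mul, zero_add, h1] at h3
          simp [tri_mul_def, Prod.ext_iff] at h3
          simp [h3]
        exact op_injective (by simpa using hop)
      simp [h1, Prod.ext_iff, hr, h2.1, h2.2]
    -- combine
    intro x
    have hx : x = ((x.1,0,0) : A × M × B) + ((0,x.2.1,0) + (0,0,x.2.2)) := by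
      simp [Prod.ext_iff]
    rw [hx, map_add, map_add, hda, hdm0, hdb]
    simp
  intro x y
  rw [hD x y, key y, mul_zero, add_zero]
end

section
/- Let T = Trian(A, M, B) be a triangular algebra over R such that the algebras A and B have only trivial idempotents. Then every algebra automorphism σ of T is of the form σ(a, m, b) = (f(a), f(a)·m₀ − m₀·g(b) + ν(m), g(b)) for all (a, m, b) ∈ T, where f is an algebra automorphism of A, g is an algebra automorphism of B, m₀ is an element of M, and ν : M → M is a bijective R-linear map satisfying ν(a·m) = f(a)·ν(m) and ν(m·b) = ν(m)·g(b) for all a ∈ A, b ∈ B, m ∈ M. -/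
/-!
Triangular algebras `Trian(A, M, B)` realized on the type `A × M × B`, where `A`, `B` are
unital associative `R`-algebras and `M` is an `(A, B)`-bimodule (a left `A`-module and a
right `B`-module, the right action being encoded as a left `Bᵐᵒᵖ`-action, written
`op b • m`, with the two actions commuting), compatible with the `R`-module structure.
-/

set_option linter.unusedSectionVars false

open MulOpposite

variable {R A B M : Type*} [CommRing R] [Ring A] [Ring B]
  [Algebra R A] [Algebra R B]
  [AddCommGroup M] [Module R M]
  [Module A M] [Module Bᵐᵒᵖ M]
  [SMulCommClass A Bᵐᵒᵖ M]
  [IsScalarTower R A M] [SMulCommClass R A M]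
  [IsScalarTower R Bᵐᵒᵖ M] [SMulCommClass R Bᵐᵒᵖ M]

/-!
An automorphism `σ` sends the idempotent `e = (1, 0, 0)` to an idempotent `E` whose diagonal
entries are idempotents of `A` and `B`, hence `0` or `1`. Since `σ` is injective, fixes `1` and
cannot kill the corner `e T (1 - e) ≅ M`, only `E = (1, m₀, 0)` survives. Then `σ` maps the
Peirce corners `e T e`, `e T (1 - e)`, `(1 - e) T (1 - e)` into `E T E`, `E T (1 - E)`,
`(1 - E) T (1 - E)`, and the shape of these corners yields `f`, `ν`, `g` and the formula.
-/

namespace Trian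

@[simp] theorem fst_one : (1 : A × M × B).1 = 1 := rfl

@[simp] theorem snd_fst_one : (1 : A × M × B).2.1 = 0 := rfl

@[simp] theorem snd_snd_one : (1 : A × M × B).2.2 = 1 := rfl

@[simp] theorem fst_mul (x y : A × M × B) : (x * y).1 = x.1 * y.1 := rfl

@[simp] theorem snd_fst_mul (x y : A × M × B) : (x * y).2.1 = x.1 • y.2.1 + op y.2.2 • x.2.1 :=
  rfl

@[simp] theorem snd_snd_mul (x y : A × M × B) : (x * y).2.2 = x.2.2 * y.2.2 := rfl

def idem (m₀ : M) : A × M × B := (1, m₀, 0)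

theorem isIdempotentElem_idem (m₀ : M) : IsIdempotentElem (idem m₀ : A × M × B) := by
  simp [IsIdempotentElem, idem, Prod.ext_iff]

theorem one_sub_idem (m₀ : M) : (1 : A × M × B) - idem m₀ = (0, -m₀, 1) := by
  simp [idem, Prod.ext_iff]

theorem idem_mul_mul_idem (m₀ : M) (x : A × M × B) :
    idem m₀ * x * idem m₀ = (x.1, x.1 • m₀, 0) := by
  simp [idem, Prod.ext_iff]

theorem idem_mul_mul_one_sub_idem (m₀ : M) (x : A × M × B) :
    idem m₀ * x * (1 - idem m₀) = (0, x.2.1 + op x.2.2 • m₀ - x.1 • m₀, 0) := by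
  simp [idem, Prod.ext_iff]
  abel

theorem one_sub_idem_mul_mul_one_sub_idem (m₀ : M) (x : A × M × B) :
    (1 - idem m₀) * x * (1 - idem m₀) = (0, -(op x.2.2 • m₀), x.2.2) := by
  simp [one_sub_idem, Prod.ext_iff]

theorem eq_zero_of_isIdempotentElem {e : A × M × B} (he : IsIdempotentElem e) (h₁ : e.1 = 0)
    (h₂ : e.2.2 = 0) : e = 0 := by
  rw [← he.eq]
  simp [Prod.ext_iff, h₁, h₂]

theorem mul_mul_one_sub_eq_zero {e : A × M × B} (h₁ : e.1 = 0) (h₂ : e.2.2 = 1)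
    (x : A × M × B) : e * x * (1 - e) = 0 := by
  simp [Prod.ext_iff, h₁, h₂]

theorem exists_map_idem_zero_eq_idem [Nontrivial M]
    (hA : ∀ e : A, IsIdempotentElem e → e = 0 ∨ e = 1)
    (hB : ∀ e : B, IsIdempotentElem e → e = 0 ∨ e = 1)
    (σ : (A × M × B) ≃ₐ[R] (A × M × B)) : ∃ m₀ : M, σ (idem 0) = idem m₀ := by
  have := Module.nontrivial A M
  have : Nontrivial B := have := Module.nontrivial Bᵐᵒᵖ M; unop_injective.nontrivial
  have hσ : ∀ x, σ x = 0 → x = 0 := fun x => (map_eq_zero_iff σ σ.injective).1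
  set E := σ (idem 0)
  have hE : IsIdempotentElem E := (isIdempotentElem_idem 0).map σ
  rcases hA E.1 (congrArg Prod.fst hE.eq) with h₁ | h₁ <;>
    rcases hB E.2.2 (congrArg (fun x : A × M × B => x.2.2) hE.eq) with h₂ | h₂
  · exact absurd (congrArg Prod.fst (hσ _ (eq_zero_of_isIdempotentElem hE h₁ h₂))) one_ne_zero
  · obtain ⟨m, hm⟩ := exists_ne (0 : M)
    have h := mul_mul_one_sub_eq_zero h₁ h₂ (σ (0, m, 0))
    rw [← map_one σ, ← map_sub, ← map_mul, ← map_mul, idem_mul_mul_one_sub_idem] at h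
    exact absurd (congrArg (·.2.1) (hσ _ h)) (by simpa using hm)
  · exact ⟨E.2.1, Prod.ext h₁ (Prod.ext rfl h₂)⟩
  · have h := eq_zero_of_isIdempotentElem hE.one_sub (by simp [h₁]) (by simp [h₂])
    rw [← map_one σ, ← map_sub] at h
    exact absurd (congrArg (·.2.2) (hσ _ h)) (by simp [one_sub_idem])

variable (σ : (A × M × B) ≃ₐ[R] (A × M × B))

def cornerLeft : A →ₗ[R] A :=
  LinearMap.fst R A (M × B) ∘ₗ σ.toLinearMap ∘ₗ LinearMap.inl R A (M × B)

def cornerMid : M →ₗ[R] M :=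
  (LinearMap.fst R M B ∘ₗ LinearMap.snd R A (M × B)) ∘ₗ σ.toLinearMap ∘ₗ
    (LinearMap.inr R A (M × B) ∘ₗ LinearMap.inl R M B)

def cornerRight : B →ₗ[R] B :=
  (LinearMap.snd R M B ∘ₗ LinearMap.snd R A (M × B)) ∘ₗ σ.toLinearMap ∘ₗ
    (LinearMap.inr R A (M × B) ∘ₗ LinearMap.inr R M B)

theorem cornerLeft_apply (a : A) : cornerLeft σ a = (σ (a, 0, 0)).1 := rfl

theorem cornerMid_apply (m : M) : cornerMid σ m = (σ (0, m, 0)).2.1 := rfl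

theorem cornerRight_apply (b : B) : cornerRight σ b = (σ (0, 0, b)).2.2 := rfl

theorem cornerLeft_mul (a a' : A) :
    cornerLeft σ (a * a') = cornerLeft σ a * cornerLeft σ a' := by
  have h : ((a * a', 0, 0) : A × M × B) = (a, 0, 0) * (a', 0, 0) := by simp [Prod.ext_iff]
  rw [cornerLeft_apply, h, map_mul, fst_mul]
  rfl

theorem cornerRight_mul (b b' : B) :
    cornerRight σ (b * b') = cornerRight σ b * cornerRight σ b' := by
  have h : ((0, 0, b * b') : A × M × B) = (0, 0, b) * (0, 0, b') := by simp [Prod.ext_iff]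
  rw [cornerRight_apply, h, map_mul, snd_snd_mul]
  rfl

variable {σ} {m₀ : M}

theorem map_mk_zero_zero (hE : σ (idem 0) = idem m₀) (a : A) :
    σ (a, 0, 0) = (cornerLeft σ a, cornerLeft σ a • m₀, 0) :=
  calc σ (a, 0, 0) = σ (idem 0 * (a, 0, 0) * idem 0) := by simp [idem_mul_mul_idem]
    _ = _ := by rw [map_mul, map_mul, hE, idem_mul_mul_idem]; rfl

theorem map_zero_mk_zero (hE : σ (idem 0) = idem m₀) (m : M) :
    σ (0, m, 0) = (0, cornerMid σ m, 0) := by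
  have h : σ (0, m, 0) = σ (idem 0 * (0, m, 0) * (1 - idem 0)) := by
    simp [idem_mul_mul_one_sub_idem]
  rw [map_mul, map_mul, map_sub, map_one, hE, idem_mul_mul_one_sub_idem] at h
  have h₁ : (σ (0, m, 0)).1 = 0 := congrArg Prod.fst h
  have h₂ : (σ (0, m, 0)).2.2 = 0 := congrArg (fun x => x.2.2) h
  exact Prod.ext h₁ (Prod.ext rfl h₂)

theorem map_zero_zero_mk (hE : σ (idem 0) = idem m₀) (b : B) :
    σ (0, 0, b) = (0, -(op (cornerRight σ b) • m₀), cornerRight σ b) :=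
  calc σ (0, 0, b) = σ ((1 - idem 0) * (0, 0, b) * (1 - idem 0)) := by
        simp [one_sub_idem_mul_mul_one_sub_idem]
    _ = _ := by
        rw [map_mul, map_mul, map_sub, map_one, hE, one_sub_idem_mul_mul_one_sub_idem]; rfl

theorem map_eq (hE : σ (idem 0) = idem m₀) (x : A × M × B) :
    σ x = (cornerLeft σ x.1,
      cornerLeft σ x.1 • m₀ - op (cornerRight σ x.2.2) • m₀ + cornerMid σ x.2.1,
      cornerRight σ x.2.2) := by
  have h : x = (x.1, 0, 0) + (0, x.2.1, 0) + (0, 0, x.2.2) := by simp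
  rw [h, map_add, map_add, map_mk_zero_zero hE, map_zero_mk_zero hE, map_zero_zero_mk hE]
  simp only [Prod.mk_add_mk, add_zero, zero_add]
  congr 2
  abel

theorem cornerLeft_one (hE : σ (idem 0) = idem m₀) : cornerLeft σ 1 = 1 :=
  congrArg Prod.fst hE

theorem cornerRight_one (hE : σ (idem 0) = idem m₀) : cornerRight σ 1 = 1 := by
  have h : ((0, 0, 1) : A × M × B) = 1 - idem 0 := by simp [one_sub_idem]
  rw [cornerRight_apply, h, map_sub, map_one, hE, one_sub_idem]

theorem cornerMid_smul_left (hE : σ (idem 0) = idem m₀) (a : A) (m : M) :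
    cornerMid σ (a • m) = cornerLeft σ a • cornerMid σ m := by
  have h : ((0, a • m, 0) : A × M × B) = (a, 0, 0) * (0, m, 0) := by simp [Prod.ext_iff]
  rw [cornerMid_apply, h, map_mul, map_mk_zero_zero hE, map_zero_mk_zero hE]
  simp

theorem cornerMid_smul_right (hE : σ (idem 0) = idem m₀) (m : M) (b : B) :
    cornerMid σ (op b • m) = op (cornerRight σ b) • cornerMid σ m := by
  have h : ((0, op b • m, 0) : A × M × B) = (0, m, 0) * (0, 0, b) := by simp [Prod.ext_iff]
  rw [cornerMid_apply, h, map_mul, map_zero_mk_zero hE, map_zero_zero_mk hE]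
  simp

theorem cornerLeft_bijective (hE : σ (idem 0) = idem m₀) : Function.Bijective (cornerLeft σ) := by
  refine ⟨(injective_iff_map_eq_zero _).2 fun a ha => ?_, fun a => ⟨(σ.symm (a, 0, 0)).1, ?_⟩⟩
  · have h : σ (a, 0, 0) = 0 := by rw [map_mk_zero_zero hE, ha, zero_smul]; rfl
    exact congrArg Prod.fst ((map_eq_zero_iff σ σ.injective).1 h)
  · simpa using (congrArg Prod.fst (map_eq hE (σ.symm (a, 0, 0)))).symm

theorem cornerRight_bijective (hE : σ (idem 0) = idem m₀) :
    Function.Bijective (cornerRight σ) := by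
  refine ⟨(injective_iff_map_eq_zero _).2 fun b hb => ?_, fun b => ⟨(σ.symm (0, 0, b)).2.2, ?_⟩⟩
  · have h : σ (0, 0, b) = 0 := by rw [map_zero_zero_mk hE, hb, op_zero, zero_smul, neg_zero]; rfl
    exact congrArg (fun x => x.2.2) ((map_eq_zero_iff σ σ.injective).1 h)
  · simpa using (congrArg (fun x => x.2.2) (map_eq hE (σ.symm (0, 0, b)))).symm

theorem cornerMid_bijective (hE : σ (idem 0) = idem m₀) : Function.Bijective (cornerMid σ) := by
  refine ⟨(injective_iff_map_eq_zero _).2 fun m hm => ?_, fun m => ⟨(σ.symm (0, m, 0)).2.1, ?_⟩⟩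
  · have h : σ (0, m, 0) = 0 := by rw [map_zero_mk_zero hE, hm]; rfl
    exact congrArg (fun x => x.2.1) ((map_eq_zero_iff σ σ.injective).1 h)
  · have h := map_eq hE (σ.symm (0, m, 0))
    rw [AlgEquiv.apply_symm_apply, Prod.mk.injEq, Prod.mk.injEq] at h
    obtain ⟨h₁, h₂, h₃⟩ := h
    rw [← h₁, ← h₃] at h₂
    simpa using h₂.symm

end Trian

theorem automorphism_standard_form_general
    [Nontrivial M]
    (hA : ∀ e : A, e * e = e → e = 0 ∨ e = 1)
    (hB : ∀ e : B, e * e = e → e = 0 ∨ e = 1)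
    (σ : (A × M × B) ≃ₐ[R] (A × M × B)) :
    ∃ (f : A ≃ₐ[R] A) (g : B ≃ₐ[R] B) (m₀ : M) (ν : M ≃ₗ[R] M),
      (∀ (a : A) (m : M), ν (a • m) = f a • ν m) ∧
      (∀ (m : M) (b : B), ν (op b • m) = op (g b) • ν m) ∧
      ∀ (a : A) (m : M) (b : B),
        σ (a, m, b) = (f a, f a • m₀ - op (g b) • m₀ + ν m, g b) := by
  obtain ⟨m₀, hE⟩ := Trian.exists_map_idem_zero_eq_idem hA hB σ
  exact ⟨.ofBijective (.ofLinearMap _ (Trian.cornerLeft_one hE) (Trian.cornerLeft_mul σ))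
      (Trian.cornerLeft_bijective hE),
    .ofBijective (.ofLinearMap _ (Trian.cornerRight_one hE) (Trian.cornerRight_mul σ))
      (Trian.cornerRight_bijective hE),
    m₀, .ofBijective _ (Trian.cornerMid_bijective hE), Trian.cornerMid_smul_left hE,
    Trian.cornerMid_smul_right hE, fun a m b => Trian.map_eq hE (a, m, b)⟩

/-- Every algebra automorphism of a triangular algebra whose corner
algebras have only trivial idempotents is of the standard form. -/
theorem automorphism_standard_form
    [Nontrivial M] [FaithfulSMul A M] [FaithfulSMul Bᵐᵒᵖ M]
    (hA : ∀ e : A, e * e = e → e = 0 ∨ e = 1)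
    (hB : ∀ e : B, e * e = e → e = 0 ∨ e = 1)
    (σ : (A × M × B) ≃ₐ[R] (A × M × B)) :
    ∃ (f : A ≃ₐ[R] A) (g : B ≃ₐ[R] B) (m₀ : M) (ν : M ≃ₗ[R] M),
      (∀ (a : A) (m : M), ν (a • m) = f a • ν m) ∧
      (∀ (m : M) (b : B), ν (op b • m) = op (g b) • ν m) ∧
      ∀ (a : A) (m : M) (b : B),
        σ (a, m, b) = (f a, f a • m₀ - op (g b) • m₀ + ν m, g b) :=
  automorphism_standard_form_general hA hB σ
end

section
/- Let T = Trian(A, M, B) be a triangular algebra over R in which A and B have only trivial idempotents, and let σ be an automorphism of T given in standard form with data (f, g, m₀, ν). Then every σ-derivation d of T is of the form d(a, m, b) = (d_A(a), f(a)·m_d − m_d·b − m₀·d_B(b) + ξ(m), d_B(b)) for all (a, m, b) ∈ T, where d_A is an f-derivation of A (d_A(aa') = d_A(a)a' + f(a)d_A(a')), d_B is a g-derivation of B (d_B(bb') = d_B(b)b' + g(b)d_B(b')), m_d is an element of M, and ξ : M → M is an R-linear map satisfying ξ(a·m) = d_A(a)·m + f(a)·ξ(m) and ξ(m·b) = ξ(m)·b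 + ν(m)·d_B(b) for all a ∈ A, b ∈ B, m ∈ M. -/
/-!
Triangular algebras `Trian(A, M, B)` realized on the type `A × M × B`, where `A`, `B` are
unital associative `R`-algebras and `M` is an `(A, B)`-bimodule (a left `A`-module and a
right `B`-module, the right action being encoded as a left `Bᵐᵒᵖ`-action, written
`op b • m`, with the two actions commuting), compatible with the `R`-module structure.
-/

set_option linter.unusedSectionVars false

open MulOpposite

variable {R A B M : Type*} [CommRing R] [Ring A] [Ring B]
  [Algebra R A] [Algebra R B]
  [AddCommGroup M] [Module R M]
  [Module A M] [Module Bᵐᵒᵖ M]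
  [SMulCommClass A Bᵐᵒᵖ M]
  [IsScalarTower R A M] [SMulCommClass R A M]
  [IsScalarTower R Bᵐᵒᵖ M] [SMulCommClass R Bᵐᵒᵖ M]

/-!
With `p = (1, 0, 0)` and `q = 1 - p`, the twisted Leibniz rule applied to `p * p` forces
`d p = (0, m_d, 0)`, and `d q = -d p` because `d 1 = 0`. The factorisations
`(a, 0, 0) = (a, 0, 0) * p`, `(0, 0, b) = q * (0, 0, b)` and `(0, m, 0) = p * (0, m, 0) * q`
then pin down `d` on each corner up to its diagonal blocks `d_A`, `d_B`, `ξ`, and the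
rules these blocks obey are components of `d (x * y) = d x * y + σ x * d y` for corner
elements `x`, `y`.
-/

theorem map_one_eq_zero_of_twisted_leibniz {T : Type*} [Ring T] {σ : T → T} (hσ : σ 1 = 1)
    {d : T → T} (hd : ∀ x y, d (x * y) = d x * y + σ x * d y) : d 1 = 0 := by
  simpa [hσ] using hd 1 1

namespace Trian

variable (d : (A × M × B) →ₗ[R] (A × M × B))

def leftPart : A →ₗ[R] A := LinearMap.fst R A (M × B) ∘ₗ d ∘ₗ LinearMap.inl R A (M × B)

def rightPart : B →ₗ[R] B :=
  (LinearMap.snd R M B ∘ₗ LinearMap.snd R A (M × B)) ∘ₗ d ∘ₗ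
    (LinearMap.inr R A (M × B) ∘ₗ LinearMap.inr R M B)

def bimodulePart : M →ₗ[R] M :=
  (LinearMap.fst R M B ∘ₗ LinearMap.snd R A (M × B)) ∘ₗ d ∘ₗ
    (LinearMap.inr R A (M × B) ∘ₗ LinearMap.inl R M B)

@[simp] theorem leftPart_apply (a : A) : leftPart d a = (d (a, 0, 0)).1 := rfl

@[simp] theorem rightPart_apply (b : B) : rightPart d b = (d (0, 0, b)).2.2 := rfl

@[simp] theorem bimodulePart_apply (m : M) : bimodulePart d m = (d (0, m, 0)).2.1 := rfl

variable {f : A ≃ₐ[R] A} {g : B ≃ₐ[R] B} {m₀ : M} {ν : M ≃ₗ[R] M}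
  {σ : (A × M × B) ≃ₐ[R] (A × M × B)}
  (hσ : ∀ (a : A) (m : M) (b : B), σ (a, m, b) = (f a, f a • m₀ - op (g b) • m₀ + ν m, g b))
  {d} (hd : ∀ x y : A × M × B, d (x * y) = d x * y + σ x * d y)
include hσ hd

theorem apply_one_zero_zero : d (1, 0, 0) = (0, (d (1, 0, 0)).2.1, 0) := by
  have e := hd (1, 0, 0) (1, 0, 0)
  simp [tri_mul_def, hσ, Prod.ext_iff] at e
  ext <;> simp_all

theorem apply_zero_zero_one : d (0, 0, 1) = (0, -(d (1, 0, 0)).2.1, 0) := by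
  have h1 : d 1 = 0 := map_one_eq_zero_of_twisted_leibniz (map_one σ) hd
  have hq : ((0, 0, 1) : A × M × B) = 1 - (1, 0, 0) := by ext <;> simp [tri_one_def]
  rw [hq, map_sub, h1, apply_one_zero_zero hσ hd]
  ext <;> simp

theorem apply_left (a : A) : d (a, 0, 0) = (leftPart d a, f a • (d (1, 0, 0)).2.1, 0) := by
  have e := hd (a, 0, 0) (1, 0, 0)
  rw [apply_one_zero_zero hσ hd] at e
  simp [tri_mul_def, hσ, Prod.ext_iff] at e
  ext <;> simp_all

theorem apply_right (b : B) :
    d (0, 0, b) = (0, -(op b • (d (1, 0, 0)).2.1) - op (rightPart d b) • m₀, rightPart d b) := by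
  have e := hd (0, 0, 1) (0, 0, b)
  rw [apply_zero_zero_one hσ hd] at e
  simp [tri_mul_def, hσ, Prod.ext_iff] at e
  ext <;> simp_all [sub_eq_add_neg]

theorem apply_bimodule (m : M) : d (0, m, 0) = (0, bimodulePart d m, 0) := by
  have e₁ := hd (0, m, 0) (0, 0, 1)
  have e₂ := hd (1, 0, 0) (0, m, 0)
  rw [apply_zero_zero_one hσ hd] at e₁
  rw [apply_one_zero_zero hσ hd] at e₂
  simp [tri_mul_def, hσ, Prod.ext_iff] at e₁ e₂
  ext <;> simp_all

theorem leftPart_mul (a a' : A) :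
    leftPart d (a * a') = leftPart d a * a' + f a * leftPart d a' := by
  simpa [tri_mul_def, hσ] using congrArg Prod.fst (hd (a, 0, 0) (a', 0, 0))

theorem rightPart_mul (b b' : B) :
    rightPart d (b * b') = rightPart d b * b' + g b * rightPart d b' := by
  simpa [tri_mul_def, hσ] using congrArg (·.2.2) (hd (0, 0, b) (0, 0, b'))

theorem bimodulePart_smul (a : A) (m : M) :
    bimodulePart d (a • m) = leftPart d a • m + f a • bimodulePart d m := by
  have e := congrArg (·.2.1) (hd (a, 0, 0) (0, m, 0))
  rw [apply_bimodule hσ hd m] at e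
  simpa [tri_mul_def, hσ] using e

theorem bimodulePart_op_smul (m : M) (b : B) :
    bimodulePart d (op b • m) = op b • bimodulePart d m + op (rightPart d b) • ν m := by
  have e := congrArg (·.2.1) (hd (0, m, 0) (0, 0, b))
  rw [apply_bimodule hσ hd m] at e
  simpa [tri_mul_def, hσ] using e

theorem apply_eq (a : A) (m : M) (b : B) :
    d (a, m, b) = (leftPart d a, f a • (d (1, 0, 0)).2.1 - op b • (d (1, 0, 0)).2.1
      - op (rightPart d b) • m₀ + bimodulePart d m, rightPart d b) := by
  have hsplit : ((a, m, b) : A × M × B) = (a, 0, 0) + (0, m, 0) + (0, 0, b) := by ext <;> simp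
  rw [hsplit, map_add, map_add, apply_left hσ hd, apply_bimodule hσ hd, apply_right hσ hd]
  ext <;> simp only [Prod.fst_add, Prod.snd_add, add_zero, zero_add]
  abel

end Trian

theorem sigma_derivation_description_general
    (f : A ≃ₐ[R] A) (g : B ≃ₐ[R] B) (m₀ : M) (ν : M ≃ₗ[R] M)
    (σ : (A × M × B) ≃ₐ[R] (A × M × B))
    (hσ : ∀ (a : A) (m : M) (b : B),
      σ (a, m, b) = (f a, f a • m₀ - op (g b) • m₀ + ν m, g b))
    (d : (A × M × B) →ₗ[R] (A × M × B))
    (hd : ∀ x y : A × M × B, d (x * y) = d x * y + σ x * d y) :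
    ∃ (dA : A →ₗ[R] A) (dB : B →ₗ[R] B) (m_d : M) (ξ : M →ₗ[R] M),
      -- dA is an f-derivation of A
      (∀ a a' : A, dA (a * a') = dA a * a' + f a * dA a') ∧
      -- dB is a g-derivation of B
      (∀ b b' : B, dB (b * b') = dB b * b' + g b * dB b') ∧
      -- compatibility properties of ξ
      (∀ (a : A) (m : M), ξ (a • m) = dA a • m + f a • ξ m) ∧
      (∀ (m : M) (b : B), ξ (op b • m) = op b • ξ m + op (dB b) • ν m) ∧
      -- the form of d
      (∀ (a : A) (m : M) (b : B),
        d (a, m, b) = (dA a, f a • m_d - op b • m_d - op (dB b) • m₀ + ξ m, dB b)) :=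
  ⟨Trian.leftPart d, Trian.rightPart d, (d (1, 0, 0)).2.1, Trian.bimodulePart d,
    Trian.leftPart_mul hσ hd, Trian.rightPart_mul hσ hd, Trian.bimodulePart_smul hσ hd,
    Trian.bimodulePart_op_smul hσ hd, Trian.apply_eq hσ hd⟩

/-- Description of σ-derivations of a triangular algebra whose corner
algebras have only trivial idempotents. -/
theorem sigma_derivation_description
    [Nontrivial M] [FaithfulSMul A M] [FaithfulSMul Bᵐᵒᵖ M]
    (hA : ∀ e : A, e * e = e → e = 0 ∨ e = 1)
    (hB : ∀ e : B, e * e = e → e = 0 ∨ e = 1)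
    (f : A ≃ₐ[R] A) (g : B ≃ₐ[R] B) (m₀ : M) (ν : M ≃ₗ[R] M)
    (hν₁ : ∀ (a : A) (m : M), ν (a • m) = f a • ν m)
    (hν₂ : ∀ (m : M) (b : B), ν (op b • m) = op (g b) • ν m)
    (σ : (A × M × B) ≃ₐ[R] (A × M × B))
    (hσ : ∀ (a : A) (m : M) (b : B),
      σ (a, m, b) = (f a, f a • m₀ - op (g b) • m₀ + ν m, g b))
    (d : (A × M × B) →ₗ[R] (A × M × B))
    (hd : ∀ x y : A × M × B, d (x * y) = d x * y + σ x * d y) :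
    ∃ (dA : A →ₗ[R] A) (dB : B →ₗ[R] B) (m_d : M) (ξ : M →ₗ[R] M),
      -- dA is an f-derivation of A
      (∀ a a' : A, dA (a * a') = dA a * a' + f a * dA a') ∧
      -- dB is a g-derivation of B
      (∀ b b' : B, dB (b * b') = dB b * b' + g b * dB b') ∧
      -- compatibility properties of ξ
      (∀ (a : A) (m : M), ξ (a • m) = dA a • m + f a • ξ m) ∧
      (∀ (m : M) (b : B), ξ (op b • m) = op b • ξ m + op (dB b) • ν m) ∧
      -- the form of d
      (∀ (a : A) (m : M) (b : B),
        d (a, m, b) = (dA a, f a • m_d - op b • m_d - op (dB b) • m₀ + ξ m, dB b)) :=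
  sigma_derivation_description_general f g m₀ ν σ hσ d hd
end

section
/- Let T = Trian(A, M, B) be a triangular algebra over R. Then every derivation d of T is of the form d(a, m, b) = (d_A(a), a·m_d − m_d·b + ξ(m), d_B(b)) for all (a, m, b) ∈ T, where d_A is a derivation of A, d_B is a derivation of B, m_d is an element of M, and ξ : M → M is an R-linear map satisfying ξ(a·m) = d_A(a)·m + a·ξ(m) and ξ(m·b) = ξ(m)·b + m·d_B(b) for all a ∈ A, b ∈ B, m ∈ M. -/
/-!
Triangular algebras `Trian(A, M, B)` realized on the type `A × M × B`, where `A`, `B` are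
unital associative `R`-algebras and `M` is an `(A, B)`-bimodule (a left `A`-module and a
right `B`-module, the right action being encoded as a left `Bᵐᵒᵖ`-action, written
`op b • m`, with the two actions commuting), compatible with the `R`-module structure.
-/

set_option linter.unusedSectionVars false

open MulOpposite

variable {R A B M : Type*} [CommRing R] [Ring A] [Ring B]
  [Algebra R A] [Algebra R B]
  [AddCommGroup M] [Module R M]
  [Module A M] [Module Bᵐᵒᵖ M]
  [SMulCommClass A Bᵐᵒᵖ M]
  [IsScalarTower R A M] [SMulCommClass R A M]
  [IsScalarTower R Bᵐᵒᵖ M] [SMulCommClass R Bᵐᵒᵖ M]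

/-- Description of derivations of a triangular algebra. -/
theorem derivation_description
    [Nontrivial M] [FaithfulSMul A M] [FaithfulSMul Bᵐᵒᵖ M]
    (d : (A × M × B) →ₗ[R] (A × M × B))
    (hd : ∀ x y : A × M × B, d (x * y) = d x * y + x * d y) :
    ∃ (dA : A →ₗ[R] A) (dB : B →ₗ[R] B) (m_d : M) (ξ : M →ₗ[R] M),
      -- dA is a derivation of A
      (∀ a a' : A, dA (a * a') = dA a * a' + a * dA a') ∧
      -- dB is a derivation of B
      (∀ b b' : B, dB (b * b') = dB b * b' + b * dB b') ∧
      -- compatibility properties of ξ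
      (∀ (a : A) (m : M), ξ (a • m) = dA a • m + a • ξ m) ∧
      (∀ (m : M) (b : B), ξ (op b • m) = op b • ξ m + op (dB b) • m) ∧
      -- the form of d
      (∀ (a : A) (m : M) (b : B),
        d (a, m, b) = (dA a, a • m_d - op b • m_d + ξ m, dB b)) := by
  
  classical
  set jA : A →ₗ[R] A × M × B := LinearMap.inl R A (M × B) with hjA
  set jM : M →ₗ[R] A × M × B :=
    (LinearMap.inr R A (M × B)).comp (LinearMap.inl R M B) with hjM
  set jB : B →ₗ[R] A × M × B :=
    (LinearMap.inr R A (M × B)).comp (LinearMap.inr R M B) with hjB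
  have hjA' : ∀ a : A, jA a = (a, 0, 0) := fun a => rfl
  have hjM' : ∀ m : M, jM m = (0, m, 0) := fun m => rfl
  have hjB' : ∀ b : B, jB b = (0, 0, b) := fun b => rfl
  -- d of the idempotent e = (1,0,0)
  have hee : ((1 : A), (0 : M), (0 : B)) * (1, 0, 0) = (1, 0, 0) := by
    simp [tri_mul_def]
  have hde := hd (1, 0, 0) (1, 0, 0)
  rw [hee] at hde
  have hde1 : (d (1, 0, 0)).1 = 0 := by
    have h := congrArg (fun x : A × M × B => x.1) hde
    simp [tri_mul_def] at h
    exact h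
  have hde3 : (d (1, 0, 0)).2.2 = 0 := by
    have h := congrArg (fun x : A × M × B => x.2.2) hde
    simpa [tri_mul_def] using h
  -- d of f = (0,0,1) via d 1 = 0
  have hone : d (1 : A × M × B) = 0 := by
    have h := hd 1 1
    rw [one_mul] at h
    rw [mul_one, one_mul] at h
    have h2 : d 1 + d 1 = d 1 := h.symm
    simpa using h2
  have hsum : ((0 : A), (0 : M), (1 : B)) = (1 : A × M × B) - ((1 : A), (0 : M), (0 : B)) := by
    rw [tri_one_def]
    refine Prod.ext ?_ (Prod.ext ?_ ?_) <;> simp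
  have hdf : d (0, 0, 1) = - d (1, 0, 0) := by
    rw [hsum, map_sub, hone, zero_sub]
  -- components of d (a,0,0)
  have hda : ∀ a : A, (d (a, 0, 0)).2.1 = a • (d (1, 0, 0)).2.1 ∧ (d (a, 0, 0)).2.2 = 0 := by
    intro a
    have hmul : ((a : A), (0 : M), (0 : B)) * (1, 0, 0) = (a, 0, 0) := by
      simp [tri_mul_def]
    have h := hd (a, 0, 0) (1, 0, 0)
    rw [hmul] at h
    constructor
    · have h2 := congrArg (fun x : A × M × B => x.2.1) h
      simpa [tri_mul_def, hde3] using h2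
    · have h3 := congrArg (fun x : A × M × B => x.2.2) h
      simpa [tri_mul_def] using h3
  -- components of d (0,0,b)
  have hdb : ∀ b : B, (d (0, 0, b)).1 = 0 ∧ (d (0, 0, b)).2.1 = - (op b • (d (1, 0, 0)).2.1) := by
    intro b
    have hmul : ((0 : A), (0 : M), (1 : B)) * (0, 0, b) = ((0 : A), (0 : M), b) := by
      simp [tri_mul_def]
    have h := hd (0, 0, 1) (0, 0, b)
    rw [hmul, hdf] at h
    constructor
    · have h1 := congrArg (fun x : A × M × B => x.1) h
      simpa [tri_mul_def, hde1] using h1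
    · have h2 := congrArg (fun x : A × M × B => x.2.1) h
      simpa [tri_mul_def, hde1] using h2
  -- components of d (0,m,0)
  have hdm : ∀ m : M, (d (0, m, 0)).1 = 0 ∧ (d (0, m, 0)).2.2 = 0 := by
    intro m
    constructor
    · have hmul : ((0 : A), (m : M), (0 : B)) * (0, 0, 1) = ((0 : A), m, (0 : B)) := by
        simp [tri_mul_def]
      have h := hd (0, m, 0) (0, 0, 1)
      rw [hmul, hdf] at h
      have h1 := congrArg (fun x : A × M × B => x.1) h
      simpa [tri_mul_def, hde1] using h1
    · have hmul : ((1 : A), (0 : M), (0 : B)) * (0, m, 0) = ((0 : A), m, (0 : B)) := by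
        simp [tri_mul_def]
      have h := hd (1, 0, 0) (0, m, 0)
      rw [hmul] at h
      have h3 := congrArg (fun x : A × M × B => x.2.2) h
      simpa [tri_mul_def, hde3] using h3
  refine ⟨(LinearMap.fst R A (M × B)).comp (d.comp jA),
    (LinearMap.snd R M B).comp ((LinearMap.snd R A (M × B)).comp (d.comp jB)),
    (d (1, 0, 0)).2.1,
    (LinearMap.fst R M B).comp ((LinearMap.snd R A (M × B)).comp (d.comp jM)),
    ?_, ?_, ?_, ?_, ?_⟩
  · intro a a'
    have hmul : ((a : A), (0 : M), (0 : B)) * (a', 0, 0) = ((a * a' : A), (0 : M), (0 : B)) := by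
      simp [tri_mul_def]
    have h := hd (a, 0, 0) (a', 0, 0)
    rw [hmul] at h
    have h1 := congrArg (fun x : A × M × B => x.1) h
    simpa [tri_mul_def, hjA'] using h1
  · intro b b'
    have hmul : ((0 : A), (0 : M), (b : B)) * (0, 0, b') = ((0 : A), (0 : M), b * b') := by
      simp [tri_mul_def]
    have h := hd (0, 0, b) (0, 0, b')
    rw [hmul] at h
    have h3 := congrArg (fun x : A × M × B => x.2.2) h
    simpa [tri_mul_def, hjB'] using h3
  · intro a m
    have hmul : ((a : A), (0 : M), (0 : B)) * (0, m, 0) = ((0 : A), a • m, (0 : B)) := by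
      simp [tri_mul_def]
    have h := hd (a, 0, 0) (0, m, 0)
    rw [hmul] at h
    have h2 := congrArg (fun x : A × M × B => x.2.1) h
    simpa [tri_mul_def, hjA', hjM', (hdm m).2] using h2
  · intro m b
    have hmul : ((0 : A), (m : M), (0 : B)) * (0, 0, b) = ((0 : A), op b • m, (0 : B)) := by
      simp [tri_mul_def]
    have h := hd (0, m, 0) (0, 0, b)
    rw [hmul] at h
    have h2 := congrArg (fun x : A × M × B => x.2.1) h
    simpa [tri_mul_def, hjM', hjB', (hdm m).1, add_comm] using h2
  · intro a m b
    have hsplit : ((a : A), (m : M), (b : B)) = (a, 0, 0) + (0, m, 0) + ((0 : A), (0 : M), b) := by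
      refine Prod.ext ?_ (Prod.ext ?_ ?_) <;> simp
    rw [hsplit, map_add, map_add]
    refine Prod.ext ?_ (Prod.ext ?_ ?_)
    · show (d (a, 0, 0)).1 + (d (0, m, 0)).1 + (d (0, 0, b)).1 = _
      rw [(hdm m).1, (hdb b).1]
      simp [hjA']
    · show (d (a, 0, 0)).2.1 + (d (0, m, 0)).2.1 + (d (0, 0, b)).2.1 = _
      rw [(hda a).1, (hdb b).2]
      simp only [hjM', LinearMap.comp_apply, LinearMap.fst_apply, LinearMap.snd_apply]
      abel
    · show (d (a, 0, 0)).2.2 + (d (0, m, 0)).2.2 + (d (0, 0, b)).2.2 = _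
      rw [(hda a).2, (hdm m).2]
      simp [hjB']
end

section
/- Let T = Trian(A, M, B) be a triangular algebra over R in which A and B have only trivial idempotents, and let σ be an automorphism of T given in standard form with data (f, g, m₀, ν). Then Z_σ(T) = {(a, −m₀·b, b) ∈ T : a·m = ν(m)·b for all m ∈ M}. Moreover, π_A(Z_σ(T)) ⊆ Z_f(A) and π_B(Z_σ(T)) ⊆ Z_g(B), where π_A, π_B are the projections (a, m, b) ↦ a and (a, m, b) ↦ b, and there exists a unique bijective map η : π_B(Z_σ(T)) → π_A(Z_σ(T)) such that η(b)·m = ν(m)·b for all b ∈ π_B(Z_σ(T)) and all m ∈ M. -/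
/-!
Triangular algebras `Trian(A, M, B)` realized on the type `A × M × B`, where `A`, `B` are
unital associative `R`-algebras and `M` is an `(A, B)`-bimodule (a left `A`-module and a
right `B`-module, the right action being encoded as a left `Bᵐᵒᵖ`-action, written
`op b • m`, with the two actions commuting), compatible with the `R`-module structure.
-/

set_option linter.unusedSectionVars false

open MulOpposite

variable {R A B M : Type*} [CommRing R] [Ring A] [Ring B]
  [Algebra R A] [Algebra R B]
  [AddCommGroup M] [Module R M]
  [Module A M] [Module Bᵐᵒᵖ M]
  [SMulCommClass A Bᵐᵒᵖ M]
  [IsScalarTower R A M] [SMulCommClass R A M]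
  [IsScalarTower R Bᵐᵒᵖ M] [SMulCommClass R Bᵐᵒᵖ M]

/-- Description of the σ-center of a triangular algebra whose corner
algebras have only trivial idempotents, together with the containments of its projections
in the f-center of A and the g-center of B, and the unique bijection η between the
projections with `η(b) • m = ν(m) • b`. -/
theorem sigma_center_description
    [Nontrivial M] [FaithfulSMul A M] [FaithfulSMul Bᵐᵒᵖ M]
    (hA : ∀ e : A, e * e = e → e = 0 ∨ e = 1)
    (hB : ∀ e : B, e * e = e → e = 0 ∨ e = 1)
    (f : A ≃ₐ[R] A) (g : B ≃ₐ[R] B) (m₀ : M) (ν : M ≃ₗ[R] M)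
    (hν₁ : ∀ (a : A) (m : M), ν (a • m) = f a • ν m)
    (hν₂ : ∀ (m : M) (b : B), ν (op b • m) = op (g b) • ν m)
    (σ : (A × M × B) ≃ₐ[R] (A × M × B))
    (hσ : ∀ (a : A) (m : M) (b : B),
      σ (a, m, b) = (f a, f a • m₀ - op (g b) • m₀ + ν m, g b)) :
    -- description of the σ-center
    (∀ z : A × M × B, (∀ x : A × M × B, σ x * z = z * x) ↔
      (z.2.1 = -(op z.2.2 • m₀) ∧ ∀ m : M, z.1 • m = op z.2.2 • ν m)) ∧
    -- π_A(Z_σ(T)) ⊆ Z_f(A)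
    (∀ z : A × M × B, (∀ x : A × M × B, σ x * z = z * x) →
      ∀ x : A, f x * z.1 = z.1 * x) ∧
    -- π_B(Z_σ(T)) ⊆ Z_g(B)
    (∀ z : A × M × B, (∀ x : A × M × B, σ x * z = z * x) →
      ∀ x : B, g x * z.2.2 = z.2.2 * x) ∧
    -- unique bijection η : π_B(Z_σ(T)) → π_A(Z_σ(T)) with η(b) • m = ν(m) • b
    (∃! η : {b : B // ∃ z : A × M × B, (∀ x : A × M × B, σ x * z = z * x) ∧ z.2.2 = b} →
            {a : A // ∃ z : A × M × B, (∀ x : A × M × B, σ x * z = z * x) ∧ z.1 = a},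
      Function.Bijective η ∧ ∀ b m, (η b : A) • m = op (b : B) • ν m) := by
  classical
  -- main equation extracted from the centrality condition
  have main : ∀ z : A × M × B, (∀ x : A × M × B, σ x * z = z * x) →
      ∀ m : M, z.1 • m = op z.2.2 • ν m := by
    intro z h m
    have h1 := congrArg (fun w : A × M × B => w.2.1) (h (0, m, 0))
    simpa [hσ, tri_mul_def] using h1.symm
  -- f-center containment from the main equation alone
  have fcent : ∀ z : A × M × B, (∀ m : M, z.1 • m = op z.2.2 • ν m) →
      ∀ x : A, f x * z.1 = z.1 * x := by
    intro z hm x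
    refine FaithfulSMul.eq_of_smul_eq_smul (fun (m : M) => ?_)
    calc (f x * z.1) • m = f x • (z.1 • m) := mul_smul _ _ _
      _ = f x • (op z.2.2 • ν m) := by rw [hm]
      _ = op z.2.2 • (f x • ν m) := smul_comm _ _ _
      _ = op z.2.2 • ν (x • m) := by rw [hν₁]
      _ = z.1 • (x • m) := (hm _).symm
      _ = (z.1 * x) • m := (mul_smul _ _ _).symm
  -- g-center containment from the main equation alone
  have gcent : ∀ z : A × M × B, (∀ m : M, z.1 • m = op z.2.2 • ν m) →
      ∀ x : B, g x * z.2.2 = z.2.2 * x := by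
    intro z hm x
    have key : ∀ m : M, op (g x * z.2.2) • m = op (z.2.2 * x) • m := by
      intro m
      obtain ⟨m', rfl⟩ := ν.surjective m
      calc op (g x * z.2.2) • ν m' = op z.2.2 • op (g x) • ν m' := by
            rw [op_mul, mul_smul]
        _ = op z.2.2 • ν (op x • m') := by rw [hν₂]
        _ = z.1 • (op x • m') := (hm _).symm
        _ = op x • (z.1 • m') := smul_comm _ _ _
        _ = op x • op z.2.2 • ν m' := by rw [hm]
        _ = op (z.2.2 * x) • ν m' := by rw [op_mul, mul_smul]
    exact op_injective (FaithfulSMul.eq_of_smul_eq_smul key)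
  refine ⟨?_, fun z h x => fcent z (main z h) x, fun z h x => gcent z (main z h) x, ?_⟩
  · intro z
    constructor
    · intro h
      refine ⟨?_, main z h⟩
      have h1 := congrArg (fun w : A × M × B => w.2.1) (h (1, 0, 0))
      simp only [hσ, tri_mul_def, map_one, map_zero, one_smul, smul_zero, op_zero,
        zero_smul, sub_zero, add_zero, zero_add, map_zero, mul_zero, mul_one] at h1
      -- h1 : z.2.1 + op z.2.2 • m₀ = 0 (up to shape)
      linear_combination (norm := abel) h1
    · rintro ⟨hc, hm⟩ ⟨a, m, b⟩
      have hg := gcent z hm b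
      rw [hσ, tri_mul_def, tri_mul_def]
      refine Prod.ext (fcent z hm a) (Prod.ext ?_ (gcent z hm b))
      show f a • z.2.1 + op z.2.2 • (f a • m₀ - op (g b) • m₀ + ν m)
          = z.1 • m + op b • z.2.1
      rw [hc, hm m]
      simp only [smul_neg, smul_add, smul_sub, smul_smul,
        smul_comm (f a) (op z.2.2), ← op_mul]
      rw [hg]
      abel
  · have prop : ∀ (b : {b : B // ∃ z : A × M × B,
        (∀ x : A × M × B, σ x * z = z * x) ∧ z.2.2 = b}),
        ∀ m : M, (b.2.choose.1 : A) • m = op (b : B) • ν m := by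
      intro b m
      have hz := b.2.choose_spec
      rw [main _ hz.1 m, hz.2]
    refine ⟨fun b => ⟨b.2.choose.1, b.2.choose, b.2.choose_spec.1, rfl⟩,
      ⟨⟨?_, ?_⟩, fun b m => prop b m⟩, ?_⟩
    · -- injective
      intro b b' hbb'
      have h := congrArg Subtype.val hbb'
      apply Subtype.ext
      have h' : b.2.choose.1 = b'.2.choose.1 := h
      have key : ∀ m : M, op (b : B) • m = op (b' : B) • m := by
        intro m
        obtain ⟨m', rfl⟩ := ν.surjective m
        rw [← prop b, ← prop b', h']
      exact op_injective (FaithfulSMul.eq_of_smul_eq_smul key)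
    · -- surjective
      rintro ⟨a, z, hz, rfl⟩
      refine ⟨⟨z.2.2, z, hz, rfl⟩, Subtype.ext ?_⟩
      refine FaithfulSMul.eq_of_smul_eq_smul (fun (m : M) => ?_)
      calc _ = op (z.2.2) • ν m := prop ⟨z.2.2, z, hz, rfl⟩ m
        _ = z.1 • m := (main z hz m).symm
    · rintro η' ⟨-, hη'⟩
      funext b
      apply Subtype.ext
      refine FaithfulSMul.eq_of_smul_eq_smul (fun (m : M) => ?_)
      calc (η' b : A) • m = op (b : B) • ν m := hη' b m
        _ = _ := (prop b m).symm
end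

section
/- Let T = Trian(A, M, B) be a triangular algebra over R. Then the center of T is Z(T) = {(a, 0, b) ∈ T : a·m = m·b for all m ∈ M}. Moreover, π_A(Z(T)) ⊆ Z(A) and π_B(Z(T)) ⊆ Z(B), where π_A, π_B are the projections (a, m, b) ↦ a and (a, m, b) ↦ b, and there exists a unique algebra isomorphism η : π_B(Z(T)) → π_A(Z(T)) such that η(b)·m = m·b for all b ∈ π_B(Z(T)) and all m ∈ M. -/
/-!
Triangular algebras `Trian(A, M, B)` realized on the type `A × M × B`, where `A`, `B` are
unital associative `R`-algebras and `M` is an `(A, B)`-bimodule (a left `A`-module and a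
right `B`-module, the right action being encoded as a left `Bᵐᵒᵖ`-action, written
`op b • m`, with the two actions commuting), compatible with the `R`-module structure.
-/

set_option linter.unusedSectionVars false

open MulOpposite

variable {R A B M : Type*} [CommRing R] [Ring A] [Ring B]
  [Algebra R A] [Algebra R B]
  [AddCommGroup M] [Module R M]
  [Module A M] [Module Bᵐᵒᵖ M]
  [SMulCommClass A Bᵐᵒᵖ M]
  [IsScalarTower R A M] [SMulCommClass R A M]
  [IsScalarTower R Bᵐᵒᵖ M] [SMulCommClass R Bᵐᵒᵖ M]

section Aux

theorem tri_central_iff [FaithfulSMul A M] [FaithfulSMul Bᵐᵒᵖ M] (z : A × M × B) :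
    (∀ x : A × M × B, z * x = x * z) ↔
      (z.2.1 = 0 ∧ ∀ m : M, z.1 • m = op z.2.2 • m) := by
  constructor
  · intro h
    have h1 := h (0, 0, 1)
    have hz0 : z.2.1 = 0 := by
      have := congrArg (fun t : A × M × B => t.2.1) h1
      simpa [tri_mul_def] using this
    refine ⟨hz0, fun m => ?_⟩
    have h2 := h (0, m, 0)
    have := congrArg (fun t : A × M × B => t.2.1) h2
    simpa [tri_mul_def, hz0] using this
  · rintro ⟨hz0, hm⟩ x
    refine Prod.ext ?_ (Prod.ext ?_ ?_)
    · show z.1 * x.1 = x.1 * z.1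
      refine eq_of_smul_eq_smul (M := A) (α := M) (fun m => ?_)
      rw [mul_smul, mul_smul, hm, hm, smul_comm x.1 (op z.2.2) m]
    · show z.1 • x.2.1 + op x.2.2 • z.2.1 = x.1 • z.2.1 + op z.2.2 • x.2.1
      rw [hz0, smul_zero, smul_zero, add_zero, zero_add, hm]
    · show z.2.2 * x.2.2 = x.2.2 * z.2.2
      have : op (z.2.2 * x.2.2) = op (x.2.2 * z.2.2) := by
        refine eq_of_smul_eq_smul (M := Bᵐᵒᵖ) (α := M) (fun m => ?_)
        rw [op_mul, op_mul, mul_smul, mul_smul, ← hm, ← hm]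
        exact (smul_comm z.1 (op x.2.2) m).symm
      exact op_injective this

/-- The projection `π_A : Trian(A,M,B) → A` as an algebra homomorphism. -/
def triFst : (A × M × B) →ₐ[R] A where
  toFun x := x.1
  map_one' := rfl
  map_mul' _ _ := rfl
  map_zero' := rfl
  map_add' _ _ := rfl
  commutes' r := by
    show (algebraMap R (A × M × B) r).1 = algebraMap R A r
    rw [Algebra.algebraMap_eq_smul_one, Algebra.algebraMap_eq_smul_one]
    rfl

/-- The projection `π_B : Trian(A,M,B) → B` as an algebra homomorphism. -/
def triSnd : (A × M × B) →ₐ[R] B where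
  toFun x := x.2.2
  map_one' := rfl
  map_mul' _ _ := rfl
  map_zero' := rfl
  map_add' _ _ := rfl
  commutes' r := by
    show (algebraMap R (A × M × B) r).2.2 = algebraMap R B r
    rw [Algebra.algebraMap_eq_smul_one, Algebra.algebraMap_eq_smul_one]
    rfl

end Aux

/-- Description of the center of a triangular algebra, the containments
of its projections in Z(A) and Z(B), and the unique algebra isomorphism
η : π_B(Z(T)) → π_A(Z(T)) with `η(b) • m = m • b`. -/
theorem center_description
    [Nontrivial M] [FaithfulSMul A M] [FaithfulSMul Bᵐᵒᵖ M] :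
    -- description of the center
    (∀ z : A × M × B, (∀ x : A × M × B, z * x = x * z) ↔
      (z.2.1 = 0 ∧ ∀ m : M, z.1 • m = op z.2.2 • m)) ∧
    -- π_A(Z(T)) ⊆ Z(A)
    (∀ z : A × M × B, (∀ x : A × M × B, z * x = x * z) →
      ∀ x : A, z.1 * x = x * z.1) ∧
    -- π_B(Z(T)) ⊆ Z(B)
    (∀ z : A × M × B, (∀ x : A × M × B, z * x = x * z) →
      ∀ x : B, z.2.2 * x = x * z.2.2) ∧
    -- π_A(Z(T)) and π_B(Z(T)) are subalgebras, and there is a unique algebra isomorphism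
    -- η : π_B(Z(T)) → π_A(Z(T)) with η(b) • m = m • b
    (∃ (SA : Subalgebra R A) (SB : Subalgebra R B),
      (∀ a : A, a ∈ SA ↔ ∃ z : A × M × B, (∀ x : A × M × B, z * x = x * z) ∧ z.1 = a) ∧
      (∀ b : B, b ∈ SB ↔ ∃ z : A × M × B, (∀ x : A × M × B, z * x = x * z) ∧ z.2.2 = b) ∧
      ∃! η : SB ≃ₐ[R] SA, ∀ (b : SB) (m : M), (η b : A) • m = op (b : B) • m) := by
  have hπA : ∀ z : A × M × B, (∀ x : A × M × B, z * x = x * z) →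
      ∀ x : A, z.1 * x = x * z.1 := by
    intro z hz x
    have hm := ((tri_central_iff z).mp hz).2
    refine eq_of_smul_eq_smul (M := A) (α := M) (fun m => ?_)
    rw [mul_smul, mul_smul, hm, hm, smul_comm x (op z.2.2) m]
  have hπB : ∀ z : A × M × B, (∀ x : A × M × B, z * x = x * z) →
      ∀ x : B, z.2.2 * x = x * z.2.2 := by
    intro z hz x
    have hm := ((tri_central_iff z).mp hz).2
    refine op_injective (eq_of_smul_eq_smul (M := Bᵐᵒᵖ) (α := M) (fun m => ?_))
    rw [op_mul, op_mul, mul_smul, mul_smul, ← hm, ← hm]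
    exact (smul_comm z.1 (op x) m).symm
  refine ⟨fun z => tri_central_iff z, hπA, hπB, ?_⟩
  classical
  set C := Subalgebra.center R (A × M × B) with hC
  have hmemC : ∀ z : A × M × B, z ∈ C ↔ ∀ x, z * x = x * z := by
    intro z
    rw [hC, Subalgebra.mem_center_iff]
    exact ⟨fun h x => (h x).symm, fun h x => (h x).symm⟩
  -- key: two central elements with equal A-components (or equal B-components) are equal
  have keyA : ∀ z w : A × M × B, (∀ x, z * x = x * z) → (∀ x, w * x = x * w) →
      z.1 = w.1 → z = w := by
    intro z w hz hw h1
    obtain ⟨hz0, hzm⟩ := (tri_central_iff z).mp hz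
    obtain ⟨hw0, hwm⟩ := (tri_central_iff w).mp hw
    have h2 : op z.2.2 = op w.2.2 := by
      refine eq_of_smul_eq_smul (M := Bᵐᵒᵖ) (α := M) (fun m => ?_)
      rw [← hzm, ← hwm, h1]
    exact Prod.ext h1 (Prod.ext (hz0.trans hw0.symm) (op_injective h2))
  have keyB : ∀ z w : A × M × B, (∀ x, z * x = x * z) → (∀ x, w * x = x * w) →
      z.2.2 = w.2.2 → z = w := by
    intro z w hz hw h2
    obtain ⟨hz0, hzm⟩ := (tri_central_iff z).mp hz
    obtain ⟨hw0, hwm⟩ := (tri_central_iff w).mp hw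
    have h1 : z.1 = w.1 := by
      refine eq_of_smul_eq_smul (M := A) (α := M) (fun m => ?_)
      rw [hzm, hwm, h2]
    exact Prod.ext h1 (Prod.ext (hz0.trans hw0.symm) h2)
  let fA : C →ₐ[R] A := triFst.comp C.val
  let fB : C →ₐ[R] B := triSnd.comp C.val
  have hfA : ∀ z : C, fA z = (z : A × M × B).1 := fun _ => rfl
  have hfB : ∀ z : C, fB z = (z : A × M × B).2.2 := fun _ => rfl
  have hAinj : Function.Injective fA := by
    intro z w h
    exact Subtype.ext (keyA z w ((hmemC _).mp z.2) ((hmemC _).mp w.2) h)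
  have hBinj : Function.Injective fB := by
    intro z w h
    exact Subtype.ext (keyB z w ((hmemC _).mp z.2) ((hmemC _).mp w.2) h)
  refine ⟨fA.range, fB.range, ?_, ?_, ?_⟩
  · intro a
    constructor
    · rintro ⟨z, rfl⟩
      exact ⟨z, (hmemC _).mp z.2, rfl⟩
    · rintro ⟨z, hz, rfl⟩
      exact ⟨⟨z, (hmemC z).mpr hz⟩, rfl⟩
  · intro b
    constructor
    · rintro ⟨z, rfl⟩
      exact ⟨z, (hmemC _).mp z.2, rfl⟩
    · rintro ⟨z, hz, rfl⟩
      exact ⟨⟨z, (hmemC z).mpr hz⟩, rfl⟩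
  · let eA : C ≃ₐ[R] fA.range := AlgEquiv.ofInjective fA hAinj
    let eB : C ≃ₐ[R] fB.range := AlgEquiv.ofInjective fB hBinj
    have hprop : ∀ (b : fB.range) (m : M),
        ((eB.symm.trans eA) b : A) • m = op (b : B) • m := by
      intro b m
      set z : C := eB.symm b with hzdef
      have hb : ((z : A × M × B).2.2) = (b : B) := by
        have h1 : (eB z : B) = fB z := AlgEquiv.ofInjective_apply fB hBinj z
        have h2 : eB z = b := by rw [hzdef]; exact eB.apply_symm_apply b
        rw [← h2, h1, hfB]
      have hval : ((eB.symm.trans eA) b : A) = (z : A × M × B).1 := by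
        show (eA z : A) = _
        rw [AlgEquiv.ofInjective_apply fA hAinj z, hfA]
      have hzm := ((tri_central_iff (z : A × M × B)).mp ((hmemC _).mp z.2)).2
      rw [hval, hzm, hb]
    refine ⟨eB.symm.trans eA, hprop, ?_⟩
    intro η' hη'
    ext b
    have h1 : ((η' b : A)) = ((eB.symm.trans eA) b : A) := by
      refine eq_of_smul_eq_smul (M := A) (α := M) (fun m => ?_)
      rw [hη' b m, ← hprop b m]
    exact_mod_cast h1
end

section
/- Let 𝒜 be a 2-torsion-free ring (2x = 0 implies x = 0) possessing a left identity e (ex = x for all x ∈ 𝒜). Then every additive skew-centralizing map f of 𝒜, i.e. every additive map f : 𝒜 → 𝒜 with f(x)x + xf(x) ∈ Z(𝒜) for all x ∈ 𝒜, is a commuting map: f(x)x = xf(x) for all x ∈ 𝒜. -/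
/-!
Central elements `z` satisfy `z * e = e * z = z`. Applied to the central value
`f e * e + e * f e` this gives `f e * e = f e`, so that value is `2 • f e` and `f e` is central.
Applied to the polarization `f x * e + e * f x + f e * x + x * f e` it then gives
`f x * e = f x`, so the polarization is `2 • f x` plus a term commuting with `x`;
since it commutes with `x`, so does `2 • f x`, hence `f x`.
-/

section

variable {A : Type*} [NonUnitalRing A]

theorem commute_of_commute_add_self (htf : ∀ x : A, x + x = 0 → x = 0) {a b : A}
    (h : Commute (a + a) b) : Commute a b := by
  refine sub_eq_zero.mp (htf _ ?_)
  calc a * b - b * a + (a * b - b * a) = (a + a) * b - b * (a + a) := by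
        simp only [add_mul, mul_add]; abel
    _ = 0 := sub_eq_zero.mpr h.eq

theorem mul_eq_self_of_commute_of_left_identity {e z : A} (he : ∀ x : A, e * x = x)
    (hz : Commute z e) : z * e = z :=
  hz.eq.trans (he z)

theorem commute_polarization (f : A →+ A) (hf : ∀ x y : A, Commute (f x * x + x * f x) y)
    (x y z : A) : Commute (f x * y + y * f x + (f y * x + x * f y)) z := by
  convert ((hf (x + y) z).sub_left (hf x z)).sub_left (hf y z) using 1
  simp only [map_add, add_mul, mul_add]
  abel

section LeftIdentity

variable {e : A} (he : ∀ x : A, e * x = x) {f : A →+ A}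
  (hf : ∀ x y : A, Commute (f x * x + x * f x) y)
include he hf

theorem map_left_identity_mul : f e * e = f e := by
  have h := mul_eq_self_of_commute_of_left_identity he (hf e e)
  simp only [add_mul, mul_assoc, he] at h
  exact add_left_cancel h

theorem commute_map_left_identity (htf : ∀ x : A, x + x = 0 → x = 0) (y : A) :
    Commute (f e) y := by
  have h := hf e y
  rw [he, map_left_identity_mul he hf] at h
  exact commute_of_commute_add_self htf h

theorem map_mul_left_identity (htf : ∀ x : A, x + x = 0 → x = 0) (x : A) : f x * e = f x := by
  have h := mul_eq_self_of_commute_of_left_identity he (commute_polarization f hf x e e)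
  rw [(commute_map_left_identity he hf htf x).eq] at h
  simp only [add_mul, mul_assoc, he, map_left_identity_mul he hf] at h
  exact add_left_cancel (add_right_cancel h)

end LeftIdentity

end

/-- (Sharma–Dhara) Over a 2-torsion-free (not necessarily unital)
associative ring possessing a left identity, every additive skew-centralizing map is a
commuting map. -/
theorem skew_centralizing_is_commuting {A : Type*} [NonUnitalRing A]
    (htf : ∀ x : A, x + x = 0 → x = 0)
    (e : A) (he : ∀ x : A, e * x = x)
    (f : A →+ A)
    (hf : ∀ x y : A, (f x * x + x * f x) * y = y * (f x * x + x * f x)) :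
    ∀ x : A, f x * x = x * f x := by
  intro x
  have hfe := commute_map_left_identity he hf htf
  have hpol := commute_polarization f hf x e x
  rw [map_mul_left_identity he hf htf x, he] at hpol
  have hrest : Commute (f e * x + x * f e) x :=
    ((hfe x).mul_left (.refl x)).add_left ((Commute.refl x).mul_left (hfe x))
  have hsum := hpol.sub_left hrest
  rw [add_sub_cancel_right] at hsum
  exact commute_of_commute_add_self htf hsum
end
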